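/- arXiv:2504.13336 — 5 statements merged into one kernel-verified Lean document; each statement's English description precedes it below -/
import Mathlib

section
/- Fix points x_1,…,x_n ∈ ℝ^d. For each i let p_t(·|x_i) be a strictly positive probability density on ℝ^d for every t ∈ [0,1] and v_t(·|x_i) : ℝ^d → ℝ^d a vector field, and define p^n_t(x) = (1/n)∑_{i=1}^n p_t(x|x_i) and v^n_t(x) = ∑_{i=1}^n v_t(x|x_i) p_t(x|x_i)/∑_{j=1}^n p_t(x|x_j). Then for every measurable v̂ : [0,1]×ℝ^d → ℝ^d for which all integrals below are finite, the difference ∫_0^1 ∫ |v̂_t(x) − v^n_t(x)|² p^n_t(x) dx dt − ∫_0^1 (1/n)∑_{i=1}^n ∫ |v̂_t(x) − v_t(x|x_i)|² p_t(x|x_i) dx dt equals ∫_0^1 [∫ |v^n_t(x)|² p^n_t(x) dx − (1/n)∑_{i=1}^n ∫ |v_t(x|x_i)|² p_t(x|x_i) dx] dt, which does not depend on v̂. In particular, over any class of vector fields, the set of minimizers of the two objectives coincide. -/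
open MeasureTheory

noncomputable section

/-- The empirical probability path `p^n_t(x) = (1/n) ∑_{i=1}^n p_t(x|x_i)`. -/
def empPath {d n : ℕ} (p : ℝ → EuclideanSpace ℝ (Fin d) → EuclideanSpace ℝ (Fin d) → ℝ)
    (X : Fin n → EuclideanSpace ℝ (Fin d)) (t : ℝ) (x : EuclideanSpace ℝ (Fin d)) : ℝ :=
  (n : ℝ)⁻¹ * ∑ i, p t x (X i)

/-- The empirical vector field
`v^n_t(x) = ∑_{i=1}^n v_t(x|x_i) p_t(x|x_i) / ∑_{j=1}^n p_t(x|x_j)`. -/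
def empField {d n : ℕ} (p : ℝ → EuclideanSpace ℝ (Fin d) → EuclideanSpace ℝ (Fin d) → ℝ)
    (v : ℝ → EuclideanSpace ℝ (Fin d) → EuclideanSpace ℝ (Fin d) → EuclideanSpace ℝ (Fin d))
    (X : Fin n → EuclideanSpace ℝ (Fin d)) (t : ℝ) (x : EuclideanSpace ℝ (Fin d)) :
    EuclideanSpace ℝ (Fin d) :=
  (∑ j, p t x (X j))⁻¹ • ∑ i, p t x (X i) • v t x (X i)

/-- The empirical (unconditioned) Flow Matching objective
`ṽ ↦ ∫_0^1 ∫ |ṽ_t(x) − v^n_t(x)|² p^n_t(x) dx dt`. -/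
def FMobj {d n : ℕ} (p : ℝ → EuclideanSpace ℝ (Fin d) → EuclideanSpace ℝ (Fin d) → ℝ)
    (v : ℝ → EuclideanSpace ℝ (Fin d) → EuclideanSpace ℝ (Fin d) → EuclideanSpace ℝ (Fin d))
    (X : Fin n → EuclideanSpace ℝ (Fin d))
    (u : ℝ → EuclideanSpace ℝ (Fin d) → EuclideanSpace ℝ (Fin d)) : ℝ :=
  ∫ t in (0:ℝ)..1, ∫ x, ‖u t x - empField p v X t x‖ ^ 2 * empPath p X t x

/-- The empirical conditional Flow Matching objective
`ṽ ↦ ∫_0^1 (1/n)∑_i ∫ |ṽ_t(x) − v_t(x|x_i)|² p_t(x|x_i) dx dt`. -/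
def CFMobj {d n : ℕ} (p : ℝ → EuclideanSpace ℝ (Fin d) → EuclideanSpace ℝ (Fin d) → ℝ)
    (v : ℝ → EuclideanSpace ℝ (Fin d) → EuclideanSpace ℝ (Fin d) → EuclideanSpace ℝ (Fin d))
    (X : Fin n → EuclideanSpace ℝ (Fin d))
    (u : ℝ → EuclideanSpace ℝ (Fin d) → EuclideanSpace ℝ (Fin d)) : ℝ :=
  ∫ t in (0:ℝ)..1, (n : ℝ)⁻¹ * ∑ i, ∫ x, ‖u t x - v t x (X i)‖ ^ 2 * p t x (X i)

/-- `u` is an admissible competitor: it is measurable and all integrals appearing in the two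
Flow Matching objectives (and in the `u`-free remainder term) are finite. -/
def Admissible {d n : ℕ} (p : ℝ → EuclideanSpace ℝ (Fin d) → EuclideanSpace ℝ (Fin d) → ℝ)
    (v : ℝ → EuclideanSpace ℝ (Fin d) → EuclideanSpace ℝ (Fin d) → EuclideanSpace ℝ (Fin d))
    (X : Fin n → EuclideanSpace ℝ (Fin d))
    (u : ℝ → EuclideanSpace ℝ (Fin d) → EuclideanSpace ℝ (Fin d)) : Prop :=
  Measurable (fun q : ℝ × EuclideanSpace ℝ (Fin d) => u q.1 q.2) ∧
  (∀ t ∈ Set.Icc (0:ℝ) 1,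
    Integrable (fun x => ‖u t x - empField p v X t x‖ ^ 2 * empPath p X t x)) ∧
  (∀ t ∈ Set.Icc (0:ℝ) 1, ∀ i,
    Integrable (fun x => ‖u t x - v t x (X i)‖ ^ 2 * p t x (X i))) ∧
  (∀ t ∈ Set.Icc (0:ℝ) 1,
    Integrable (fun x => ‖empField p v X t x‖ ^ 2 * empPath p X t x)) ∧
  (∀ t ∈ Set.Icc (0:ℝ) 1, ∀ i,
    Integrable (fun x => ‖v t x (X i)‖ ^ 2 * p t x (X i))) ∧
  IntervalIntegrable
    (fun t => ∫ x, ‖u t x - empField p v X t x‖ ^ 2 * empPath p X t x) volume 0 1 ∧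
  IntervalIntegrable
    (fun t => (n : ℝ)⁻¹ * ∑ i, ∫ x, ‖u t x - v t x (X i)‖ ^ 2 * p t x (X i)) volume 0 1 ∧
  IntervalIntegrable
    (fun t => ∫ x, ‖empField p v X t x‖ ^ 2 * empPath p X t x) volume 0 1 ∧
  IntervalIntegrable
    (fun t => (n : ℝ)⁻¹ * ∑ i, ∫ x, ‖v t x (X i)‖ ^ 2 * p t x (X i)) volume 0 1

section CenterMass

variable {ι E : Type*} [NormedAddCommGroup E] [InnerProductSpace ℝ E]
  (s : Finset ι) (w : ι → ℝ) (z : ι → E)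

lemma Finset.inner_centerMass_mul_sum (hw : ∑ i ∈ s, w i ≠ 0) (a : E) :
    inner ℝ a (s.centerMass w z) * ∑ i ∈ s, w i = ∑ i ∈ s, inner ℝ a (z i) * w i := by
  simp only [Finset.centerMass, inner_smul_right, inner_sum]
  rw [mul_comm, ← mul_assoc, mul_inv_cancel₀ hw, one_mul]
  exact Finset.sum_congr rfl fun i _ => mul_comm _ _

/-- Huygens' parallel axis theorem for a finite weighted family of points. -/
theorem Finset.sum_norm_sub_sq_mul_eq (hw : ∑ i ∈ s, w i ≠ 0) (a : E) :
    ∑ i ∈ s, ‖a - z i‖ ^ 2 * w i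
      = ‖a - s.centerMass w z‖ ^ 2 * ∑ i ∈ s, w i
        + ∑ i ∈ s, ‖z i - s.centerMass w z‖ ^ 2 * w i := by
  set c := s.centerMass w z
  have hac := s.inner_centerMass_mul_sum w z hw a
  have hcc := s.inner_centerMass_mul_sum w z hw c
  have hzc : ∑ i ∈ s, inner ℝ (z i) c * w i = ∑ i ∈ s, inner ℝ c (z i) * w i :=
    Finset.sum_congr rfl fun i _ => by rw [real_inner_comm]
  rw [real_inner_self_eq_norm_sq] at hcc
  simp only [norm_sub_sq_real, add_mul, sub_mul, Finset.sum_add_distrib, Finset.sum_sub_distrib,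
    ← Finset.mul_sum, mul_assoc]
  linear_combination 2 * hac - 2 * hcc + 2 * hzc

end CenterMass

lemma minimizers_eq_of_sub_eq_const {α : Type*} {N : Set α} {f g : α → ℝ} {c : ℝ}
    (h : ∀ u ∈ N, f u - g u = c) :
    {u | u ∈ N ∧ ∀ u' ∈ N, f u ≤ f u'} = {u | u ∈ N ∧ ∀ u' ∈ N, g u ≤ g u'} := by
  ext u
  refine and_congr_right fun hu => forall₂_congr fun u' hu' => ?_
  have := h u hu
  have := h u' hu'
  constructor <;> intro <;> linarith

section FlowMatching

variable {d n : ℕ} (p : ℝ → EuclideanSpace ℝ (Fin d) → EuclideanSpace ℝ (Fin d) → ℝ)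
  (v : ℝ → EuclideanSpace ℝ (Fin d) → EuclideanSpace ℝ (Fin d) → EuclideanSpace ℝ (Fin d))
  (X : Fin n → EuclideanSpace ℝ (Fin d))

lemma empField_eq_centerMass (t : ℝ) (x : EuclideanSpace ℝ (Fin d)) :
    empField p v X t x = Finset.univ.centerMass (fun i => p t x (X i)) (fun i => v t x (X i)) :=
  rfl

/-- Both sides equal `-(1/n) ∑ᵢ ‖v_t(x|xᵢ) - v^n_t(x)‖² p_t(x|xᵢ)`, by the parallel axis
theorem around `v^n_t(x)` applied at `w` and at `0`. -/
lemma norm_sub_empField_sq_mul_empPath_sub {t : ℝ} {x : EuclideanSpace ℝ (Fin d)} (hn : 1 ≤ n)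
    (hp : ∀ i, 0 < p t x (X i)) (w : EuclideanSpace ℝ (Fin d)) :
    ‖w - empField p v X t x‖ ^ 2 * empPath p X t x
        - (n : ℝ)⁻¹ * ∑ i, ‖w - v t x (X i)‖ ^ 2 * p t x (X i)
      = ‖empField p v X t x‖ ^ 2 * empPath p X t x
        - (n : ℝ)⁻¹ * ∑ i, ‖v t x (X i)‖ ^ 2 * p t x (X i) := by
  have : Nonempty (Fin n) := ⟨⟨0, hn⟩⟩
  have hS : ∑ i, p t x (X i) ≠ 0 := (Finset.sum_pos (fun i _ => hp i) Finset.univ_nonempty).ne'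
  have hw := Finset.univ.sum_norm_sub_sq_mul_eq _ (fun i => v t x (X i)) hS w
  have h0 := Finset.univ.sum_norm_sub_sq_mul_eq _ (fun i => v t x (X i)) hS 0
  simp only [zero_sub, norm_neg] at h0
  rw [empField_eq_centerMass, empPath]
  linear_combination (-(n : ℝ)⁻¹) * hw + (n : ℝ)⁻¹ * h0

lemma FMobj_integrand_sub_CFMobj_integrand {t : ℝ} (hn : 1 ≤ n) (hp : ∀ x i, 0 < p t x (X i))
    {u : ℝ → EuclideanSpace ℝ (Fin d) → EuclideanSpace ℝ (Fin d)}
    (hfm : Integrable fun x => ‖u t x - empField p v X t x‖ ^ 2 * empPath p X t x)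
    (hcfm : ∀ i, Integrable fun x => ‖u t x - v t x (X i)‖ ^ 2 * p t x (X i))
    (hfm₀ : Integrable fun x => ‖empField p v X t x‖ ^ 2 * empPath p X t x)
    (hcfm₀ : ∀ i, Integrable fun x => ‖v t x (X i)‖ ^ 2 * p t x (X i)) :
    (∫ x, ‖u t x - empField p v X t x‖ ^ 2 * empPath p X t x)
        - (n : ℝ)⁻¹ * ∑ i, ∫ x, ‖u t x - v t x (X i)‖ ^ 2 * p t x (X i)
      = (∫ x, ‖empField p v X t x‖ ^ 2 * empPath p X t x)
        - (n : ℝ)⁻¹ * ∑ i, ∫ x, ‖v t x (X i)‖ ^ 2 * p t x (X i) := by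
  rw [← integral_finsetSum _ fun i _ => hcfm i, ← integral_finsetSum _ fun i _ => hcfm₀ i,
    ← integral_const_mul, ← integral_const_mul,
    ← integral_sub hfm ((integrable_finsetSum _ fun i _ => hcfm i).const_mul _),
    ← integral_sub hfm₀ ((integrable_finsetSum _ fun i _ => hcfm₀ i).const_mul _)]
  exact integral_congr_ae <| .of_forall fun x =>
    norm_sub_empField_sq_mul_empPath_sub p v X hn (hp x) (u t x)

lemma FMobj_sub_CFMobj (hn : 1 ≤ n) (hp : ∀ t ∈ Set.Icc (0:ℝ) 1, ∀ x i, 0 < p t x (X i))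
    {u : ℝ → EuclideanSpace ℝ (Fin d) → EuclideanSpace ℝ (Fin d)} (hu : Admissible p v X u) :
    FMobj p v X u - CFMobj p v X u
      = ∫ t in (0:ℝ)..1,
          ((∫ x, ‖empField p v X t x‖ ^ 2 * empPath p X t x)
            - (n : ℝ)⁻¹ * ∑ i, ∫ x, ‖v t x (X i)‖ ^ 2 * p t x (X i)) := by
  obtain ⟨-, hfm, hcfm, hfm₀, hcfm₀, hFM, hCFM, -, -⟩ := hu
  rw [FMobj, CFMobj, ← intervalIntegral.integral_sub hFM hCFM]
  refine intervalIntegral.integral_congr fun t ht => ?_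
  rw [Set.uIcc_of_le zero_le_one] at ht
  exact FMobj_integrand_sub_CFMobj_integrand p v X hn (hp t ht) (hfm t ht) (hcfm t ht) (hfm₀ t ht)
    (hcfm₀ t ht)

end FlowMatching

theorem empirical_conditional_flow_matching_equivalence_general (d n : ℕ) (hn : 1 ≤ n)
    (X : Fin n → EuclideanSpace ℝ (Fin d))
    (p : ℝ → EuclideanSpace ℝ (Fin d) → EuclideanSpace ℝ (Fin d) → ℝ)
    (v : ℝ → EuclideanSpace ℝ (Fin d) → EuclideanSpace ℝ (Fin d) → EuclideanSpace ℝ (Fin d))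
    (hppos : ∀ t ∈ Set.Icc (0:ℝ) 1, ∀ x, ∀ i, 0 < p t x (X i)) :
    (∀ vhat : ℝ → EuclideanSpace ℝ (Fin d) → EuclideanSpace ℝ (Fin d),
      Admissible p v X vhat →
      FMobj p v X vhat - CFMobj p v X vhat
        = ∫ t in (0:ℝ)..1,
            ((∫ x, ‖empField p v X t x‖ ^ 2 * empPath p X t x)
              - (n : ℝ)⁻¹ * ∑ i, ∫ x, ‖v t x (X i)‖ ^ 2 * p t x (X i)))
    ∧
    (∀ 𝒩 : Set (ℝ → EuclideanSpace ℝ (Fin d) → EuclideanSpace ℝ (Fin d)),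
      (∀ u ∈ 𝒩, Admissible p v X u) →
      {u | u ∈ 𝒩 ∧ ∀ u' ∈ 𝒩, FMobj p v X u ≤ FMobj p v X u'}
        = {u | u ∈ 𝒩 ∧ ∀ u' ∈ 𝒩, CFMobj p v X u ≤ CFMobj p v X u'}) := by
  have key u (hu : Admissible p v X u) := FMobj_sub_CFMobj p v X hn hppos hu
  exact ⟨key, fun 𝒩 h𝒩 => minimizers_eq_of_sub_eq_const fun u hu => key u (h𝒩 u hu)⟩

/-- **Equivalence of the empirical Flow Matching and empirical conditional Flow Matching
objectives.** For fixed points `x_1,…,x_n`, strictly positive conditional probability paths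
`p_t(·|x_i)` and conditional vector fields `v_t(·|x_i)`, for every measurable `v̂` for which
all the integrals are finite, the difference of the two objectives equals
`∫_0^1 [∫ |v^n_t(x)|² p^n_t(x) dx − (1/n)∑_i ∫ |v_t(x|x_i)|² p_t(x|x_i) dx] dt`,
which does not depend on `v̂`. In particular, over any class of vector fields, the sets of
minimizers of the two objectives coincide. -/
theorem empirical_conditional_flow_matching_equivalence (d n : ℕ) (hn : 1 ≤ n)
    (X : Fin n → EuclideanSpace ℝ (Fin d))
    (p : ℝ → EuclideanSpace ℝ (Fin d) → EuclideanSpace ℝ (Fin d) → ℝ)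
    (v : ℝ → EuclideanSpace ℝ (Fin d) → EuclideanSpace ℝ (Fin d) → EuclideanSpace ℝ (Fin d))
    (hppos : ∀ t ∈ Set.Icc (0:ℝ) 1, ∀ x, ∀ i, 0 < p t x (X i))
    (hpdens : ∀ t ∈ Set.Icc (0:ℝ) 1, ∀ i, ∫ x, p t x (X i) = 1) :
    (∀ vhat : ℝ → EuclideanSpace ℝ (Fin d) → EuclideanSpace ℝ (Fin d),
      Admissible p v X vhat →
      FMobj p v X vhat - CFMobj p v X vhat
        = ∫ t in (0:ℝ)..1,
            ((∫ x, ‖empField p v X t x‖ ^ 2 * empPath p X t x)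
              - (n : ℝ)⁻¹ * ∑ i, ∫ x, ‖v t x (X i)‖ ^ 2 * p t x (X i)))
    ∧
    (∀ 𝒩 : Set (ℝ → EuclideanSpace ℝ (Fin d) → EuclideanSpace ℝ (Fin d)),
      (∀ u ∈ 𝒩, Admissible p v X u) →
      {u | u ∈ 𝒩 ∧ ∀ u' ∈ 𝒩, FMobj p v X u ≤ FMobj p v X u'}
        = {u | u ∈ 𝒩 ∧ ∀ u' ∈ 𝒩, CFMobj p v X u ≤ CFMobj p v X u'}) :=
  empirical_conditional_flow_matching_equivalence_general d n hn X p v hppos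

end
end

section
/- Let d = 1, let Z ∼ N(0,1), let ε > 0 and define the vector fields v^{(1)}_t(x) = 0 and v^{(2)}_t(x) = ε sin(x/ε) for all t ∈ [0,1], x ∈ ℝ. Let ψ^{(1)} and ψ^{(2)} be the corresponding flows (solutions of (d/dt)ψ_t(x) = v_t(ψ_t(x)), ψ_0(x) = x). Then: (i) ‖v^{(1)} − v^{(2)}‖_∞ ≤ ε, so it tends to 0 as ε → 0; (ii) the Wasserstein-1 distance between the laws of ψ^{(1)}_1(Z) and ψ^{(2)}_1(Z) is at most ε; (iii) there exists a constant c > 0 such that liminf_{ε→0} TV(law(ψ^{(1)}_1(Z)), law(ψ^{(2)}_1(Z))) ≥ c, where TV(P,Q) = sup_{A Borel} |P(A) − Q(A)| is the total variation distance. -/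
/-
The flow of `v⁽¹⁾ = 0` is the identity and the flow of `v⁽²⁾` moves every point by at most `ε`,
which gives the `W₁` bound. For total variation, rescale `u = ψ / ε`: then `u' = sin u`, and
`g = cos u` solves `g' = g² - 1`, so a point starting in `{x | cos (x / ε) ≤ cos 1}` is, at time
`1`, in `{x | cos (x / ε) ≤ 0}`. Since the Gaussian density is even and decreasing on `[0, ∞)`,
comparing each period of length `2πε` with its neighbour shows that the Gaussian gives
`{x | cos (x / ε) ≤ cos a}` mass `1 - a / π` up to `2πε`. So the pushed-forward law gives
`{x | cos (x / ε) ≤ 0}` mass at least `1 - 1/π - 2πε`, the Gaussian itself at most `1/2 + 2πε`,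
and the total variation is at least `1/2 - 1/π - 4πε ≥ 1/10` for small `ε`.
-/

open MeasureTheory ProbabilityTheory

noncomputable section

/-- Wasserstein-1 distance between measures on `ℝ` (dual formulation):
`W₁(P,Q) = sup { ∫ f dP − ∫ f dQ : f 1-Lipschitz }`. -/
def W1 (P Q : Measure ℝ) : ℝ :=
  ⨆ f : {f : ℝ → ℝ // LipschitzWith 1 f}, (∫ x, f.1 x ∂P - ∫ x, f.1 x ∂Q)

/-- Total variation distance `TV(P,Q) = sup_{A Borel} |P(A) − Q(A)|`. -/
def TV (P Q : Measure ℝ) : ℝ :=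
  ⨆ A : {A : Set ℝ // MeasurableSet A}, |(P A.1).toReal - (Q A.1).toReal|

open Set Real
open scoped ENNReal NNReal Function

lemma abs_sub_le_of_hasDerivAt {f f' : ℝ → ℝ} {a b C : ℝ} (hab : a ≤ b)
    (hf : ∀ t ∈ Icc a b, HasDerivAt f (f' t) t) (hC : ∀ t ∈ Icc a b, |f' t| ≤ C) :
    |f b - f a| ≤ C * (b - a) :=
  norm_image_sub_le_of_norm_deriv_le_segment' (fun t ht => (hf t ht).hasDerivWithinAt)
    (fun t ht => hC t (Ico_subset_Icc_self ht)) b (right_mem_Icc.2 hab)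

lemma cos_nonpos_of_hasDerivAt_sin {u : ℝ → ℝ}
    (hu : ∀ t ∈ Icc (0 : ℝ) 1, HasDerivAt u (sin (u t)) t) (h0 : cos (u 0) ≤ cos 1) :
    cos (u 1) ≤ 0 := by
  set g := fun t => cos (u t)
  have hg : ∀ t ∈ interior (Icc (0 : ℝ) 1),
      HasDerivWithinAt g (g t ^ 2 - 1) (interior (Icc 0 1)) t := fun t ht =>
    ((hu t (interior_subset ht)).cos.congr_deriv
      (by simp only [g]; nlinarith [sin_sq_add_cos_sq (u t)])).hasDerivWithinAt
  have hcont : ContinuousOn g (Icc 0 1) := fun t ht =>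
    (hu t ht).cos.continuousAt.continuousWithinAt
  have hanti : AntitoneOn g (Icc 0 1) :=
    antitoneOn_of_hasDerivWithinAt_nonpos (convex_Icc 0 1) hcont hg
      fun t _ => by nlinarith [cos_sq_le_one (u t)]
  -- If `g` stayed positive, its slope `g² - 1` would stay below `cos 1 ^ 2 - 1`,
  -- and `cos 1 + cos 1 ^ 2 < 1`.
  by_contra! h1
  have hslope : AntitoneOn (fun t => g t - (cos 1 ^ 2 - 1) * t) (Icc 0 1) := by
    refine antitoneOn_of_hasDerivWithinAt_nonpos (convex_Icc 0 1) (hcont.sub (by fun_prop))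
      (fun t ht => (hg t ht).sub (((hasDerivWithinAt_id _ _).const_mul _).congr_deriv (mul_one _)))
      fun t ht => ?_
    have ht' := interior_subset ht
    have hg1 : g 1 ≤ g t := hanti ht' (right_mem_Icc.2 zero_le_one) ht'.2
    have hgt : g t ≤ g 0 := hanti (left_mem_Icc.2 zero_le_one) ht' ht'.1
    nlinarith
  have := hslope (left_mem_Icc.2 zero_le_one) (right_mem_Icc.2 zero_le_one) zero_le_one
  simp only [g] at this h1
  nlinarith [cos_one_le, cos_one_pos]

lemma cos_le_cos_iff_of_mem_Icc {w a : ℝ} (hw : w ∈ Icc 0 (2 * π)) (ha : a ∈ Icc 0 π) :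
    cos w ≤ cos a ↔ a ≤ w ∧ w ≤ 2 * π - a := by
  obtain ⟨hw0, hw2⟩ := hw
  obtain ⟨ha0, haπ⟩ := ha
  rcases le_total w π with hwπ | hπw
  · rw [strictAntiOn_cos.le_iff_ge ⟨hw0, hwπ⟩ ⟨ha0, haπ⟩]
    exact ⟨fun h => ⟨h, by linarith⟩, And.left⟩
  · rw [← cos_two_pi_sub w, strictAntiOn_cos.le_iff_ge ⟨by linarith, by linarith⟩ ⟨ha0, haπ⟩]
    exact ⟨fun h => ⟨by linarith, by linarith⟩, fun h => by linarith [h.2]⟩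

def cosSublevel (ε a : ℝ) : Set ℝ := {x | cos (x / ε) ≤ cos a}

section CosSublevel

variable {ε a : ℝ}

lemma measurableSet_cosSublevel : MeasurableSet (cosSublevel ε a) :=
  measurableSet_le (by fun_prop) measurable_const

lemma neg_cosSublevel : -cosSublevel ε a = cosSublevel ε a := by
  ext x; simp [cosSublevel, neg_div]

lemma flow_mem_cosSublevel {ψ : ℝ → ℝ} (hε : ε ≠ 0)
    (hψ : ∀ t ∈ Icc (0 : ℝ) 1, HasDerivAt ψ (ε * sin (ψ t / ε)) t)
    (h0 : ψ 0 ∈ cosSublevel ε 1) : ψ 1 ∈ cosSublevel ε (π / 2) := by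
  simp only [cosSublevel, mem_ofPred_eq, cos_pi_div_two] at h0 ⊢
  refine cos_nonpos_of_hasDerivAt_sin (u := fun t => ψ t / ε) (fun t ht => ?_) h0
  simpa [mul_div_cancel_left₀ _ hε] using (hψ t ht).div_const ε

lemma cosSublevel_inter_Ico (hε : 0 < ε) (ha : a ∈ Ioc 0 π) (k : ℕ) :
    cosSublevel ε a ∩ Ico (k * (2 * π * ε)) ((k + 1) * (2 * π * ε)) =
      Icc (k * (2 * π * ε) + ε * a) (k * (2 * π * ε) + ε * (2 * π - a)) := by
  ext x
  set w := x / ε - k * (2 * π)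
  have hx : x = k * (2 * π * ε) + ε * w := by simp only [w]; field_simp; ring
  have hcos : cos (x / ε) = cos w := by rw [← cos_add_nat_mul_two_pi w k]; simp only [w]; ring_nf
  have hnext : ((k : ℝ) + 1) * (2 * π * ε) = k * (2 * π * ε) + ε * (2 * π) := by ring
  simp only [cosSublevel, mem_inter_iff, mem_ofPred_eq, mem_Ico, mem_Icc, hcos, hnext]
  rw [hx]
  simp only [le_add_iff_nonneg_right, add_le_add_iff_left, add_lt_add_iff_left,
    mul_nonneg_iff_of_pos_left hε, mul_le_mul_iff_right₀ hε, mul_lt_mul_iff_right₀ hε]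
  constructor
  · rintro ⟨hc, hw0, hw2⟩
    exact (cos_le_cos_iff_of_mem_Icc ⟨hw0, hw2.le⟩ ⟨ha.1.le, ha.2⟩).1 hc
  · rintro ⟨haw, hwa⟩
    have hw0 : 0 ≤ w := ha.1.le.trans haw
    have hw2 : w < 2 * π := by linarith [ha.1]
    exact ⟨(cos_le_cos_iff_of_mem_Icc ⟨hw0, hw2.le⟩ ⟨ha.1.le, ha.2⟩).2 ⟨haw, hwa⟩, hw0, hw2⟩

end CosSublevel

section Periods

variable {p : ℝ}

lemma pairwise_disjoint_Ico_nat_mul (hp : 0 ≤ p) :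
    Pairwise (Disjoint on fun k : ℕ => Ico (k * p) ((k + 1) * p)) := by
  simpa [Order.succ_eq_add_one] using (Nat.mono_cast.mul_const hp).pairwise_disjoint_on_Ico_succ

lemma iUnion_Ico_nat_mul (hp : 0 < p) : ⋃ k : ℕ, Ico (k * p) ((k + 1) * p) = Ici 0 := by
  have h := iUnion_Ico_map_succ_eq_Ici (f := fun k : ℕ => (k : ℝ) * p)
    (fun k => Nat.mono_cast.mul_const hp.le bot_le) ?_
  · simpa [Order.succ_eq_add_one] using h
  · rintro ⟨M, hM⟩
    obtain ⟨k, hk⟩ := exists_nat_gt (M / p)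
    have := hM ⟨k, rfl⟩
    rw [div_lt_iff₀ hp] at hk
    simp only at this
    linarith

lemma volume_Ico_nat_mul (k : ℕ) : volume (Ico (k * p) ((k + 1) * p)) = ENNReal.ofReal p := by
  rw [Real.volume_Ico]; ring_nf

lemma measure_inter_Ici_eq_tsum (μ : Measure ℝ) (hp : 0 < p) {s : Set ℝ} (hs : MeasurableSet s) :
    μ (s ∩ Ici 0) = ∑' k : ℕ, μ (s ∩ Ico (k * p) ((k + 1) * p)) := by
  rw [← iUnion_Ico_nat_mul hp, inter_iUnion, measure_iUnion]
  · exact fun i j hij =>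
      (pairwise_disjoint_Ico_nat_mul hp.le hij).mono inter_subset_right inter_subset_right
  · exact fun k => hs.inter measurableSet_Ico

lemma measure_Ici_eq_tsum (μ : Measure ℝ) (hp : 0 < p) :
    μ (Ici 0) = ∑' k : ℕ, μ (Ico (k * p) ((k + 1) * p)) := by
  simpa using measure_inter_Ici_eq_tsum μ hp MeasurableSet.univ

end Periods

section AntitoneDensity

variable {φ : ℝ → ℝ≥0∞} {p : ℝ} {s : Set ℝ}

lemma withDensity_le_mul_volume (hφ : AntitoneOn φ (Ici 0)) {a : ℝ} (ha : 0 ≤ a)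
    (hs : MeasurableSet s) (hsa : s ⊆ Ici a) : volume.withDensity φ s ≤ φ a * volume s := by
  rw [withDensity_apply _ hs, ← setLIntegral_const]
  exact setLIntegral_mono' hs fun x hx => hφ ha (ha.trans (hsa hx)) (hsa hx)

lemma mul_volume_le_withDensity (hφ : AntitoneOn φ (Ici 0)) {b : ℝ}
    (hs : MeasurableSet s) (hsb : s ⊆ Icc 0 b) : φ b * volume s ≤ volume.withDensity φ s := by
  rw [withDensity_apply _ hs, ← setLIntegral_const]
  exact setLIntegral_mono' hs fun x hx => hφ (hsb hx).1 ((hsb hx).1.trans (hsb hx).2) (hsb hx).2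

/- The mass of `s` in the period `[kp, (k+1)p)` is at most `φ (kp)` times its length, and
`φ (kp) * p` is at most the mass of the previous period. -/
lemma withDensity_inter_Ici_le (hφ : AntitoneOn φ (Ici 0)) (hp : 0 < p) (hs : MeasurableSet s)
    {r : ℝ≥0∞} (hr : ∀ k : ℕ, volume (s ∩ Ico (k * p) ((k + 1) * p)) ≤ r * ENNReal.ofReal p) :
    volume.withDensity φ (s ∩ Ici 0) ≤
      r * volume.withDensity φ (Ici 0) + r * (φ 0 * ENNReal.ofReal p) := by
  set ν := volume.withDensity φ
  have hcell (k : ℕ) : ν (s ∩ Ico (k * p) ((k + 1) * p)) ≤ φ (k * p) * (r * ENNReal.ofReal p) :=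
    (withDensity_le_mul_volume hφ (by positivity) (hs.inter measurableSet_Ico)
      (inter_subset_right.trans Ico_subset_Ici_self)).trans (by gcongr; exact hr k)
  have hprev (k : ℕ) : φ ((k + 1 : ℕ) * p) * ENNReal.ofReal p ≤ ν (Ico (k * p) ((k + 1) * p)) := by
    rw [← volume_Ico_nat_mul k]
    refine mul_volume_le_withDensity hφ measurableSet_Ico fun x hx => ⟨?_, ?_⟩
    · exact le_trans (by positivity) hx.1
    · push_cast; exact hx.2.le
  calc ν (s ∩ Ici 0) = ∑' k : ℕ, ν (s ∩ Ico (k * p) ((k + 1) * p)) :=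
        measure_inter_Ici_eq_tsum ν hp hs
    _ ≤ ∑' k : ℕ, φ (k * p) * (r * ENNReal.ofReal p) := ENNReal.tsum_le_tsum hcell
    _ = r * ∑' k : ℕ, φ ((k + 1 : ℕ) * p) * ENNReal.ofReal p + r * (φ 0 * ENNReal.ofReal p) := by
        rw [tsum_eq_zero_add' ENNReal.summable, ← ENNReal.tsum_mul_left]
        simp only [CharP.cast_eq_zero, zero_mul, mul_left_comm r]
        rw [add_comm]
    _ ≤ r * ∑' k : ℕ, ν (Ico (k * p) ((k + 1) * p)) + r * (φ 0 * ENNReal.ofReal p) := by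
        gcongr with k; exact hprev k
    _ = r * ν (Ici 0) + r * (φ 0 * ENNReal.ofReal p) := by
        rw [measure_Ici_eq_tsum ν hp]

lemma mul_withDensity_Ici_le (hφ : AntitoneOn φ (Ici 0)) (hp : 0 < p) (hs : MeasurableSet s)
    {r : ℝ≥0∞} (hr : ∀ k : ℕ, r * ENNReal.ofReal p ≤ volume (s ∩ Ico (k * p) ((k + 1) * p))) :
    r * volume.withDensity φ (Ici 0) ≤
      volume.withDensity φ (s ∩ Ici 0) + r * (φ 0 * ENNReal.ofReal p) := by
  set ν := volume.withDensity φ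
  have hcell (k : ℕ) : ν (Ico (k * p) ((k + 1) * p)) ≤ φ (k * p) * ENNReal.ofReal p := by
    rw [← volume_Ico_nat_mul k]
    exact withDensity_le_mul_volume hφ (by positivity) measurableSet_Ico Ico_subset_Ici_self
  have hnext (k : ℕ) : φ ((k + 1 : ℕ) * p) * volume (s ∩ Ico (k * p) ((k + 1) * p)) ≤
      ν (s ∩ Ico (k * p) ((k + 1) * p)) := by
    refine mul_volume_le_withDensity hφ (hs.inter measurableSet_Ico) fun x hx => ⟨?_, ?_⟩
    · exact le_trans (by positivity) hx.2.1
    · push_cast; exact hx.2.2.le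
  calc r * ν (Ici 0) = r * ∑' k : ℕ, ν (Ico (k * p) ((k + 1) * p)) := by
        rw [measure_Ici_eq_tsum ν hp]
    _ ≤ r * ∑' k : ℕ, φ (k * p) * ENNReal.ofReal p := by gcongr with k; exact hcell k
    _ = ∑' k : ℕ, φ ((k + 1 : ℕ) * p) * (r * ENNReal.ofReal p) + r * (φ 0 * ENNReal.ofReal p) := by
        rw [tsum_eq_zero_add' ENNReal.summable, mul_add, ← ENNReal.tsum_mul_left]
        simp only [CharP.cast_eq_zero, zero_mul, mul_left_comm r]
        rw [add_comm]
    _ ≤ ∑' k : ℕ, ν (s ∩ Ico (k * p) ((k + 1) * p)) + r * (φ 0 * ENNReal.ofReal p) := by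
        gcongr with k; exact le_trans (by gcongr; exact hr k) (hnext k)
    _ = ν (s ∩ Ici 0) + r * (φ 0 * ENNReal.ofReal p) := by
        rw [measure_inter_Ici_eq_tsum ν hp hs]

end AntitoneDensity

lemma measure_eq_two_mul_measure_inter_Ici {μ : Measure ℝ} [NullSingletonClass μ]
    (hμ : μ.map Neg.neg = μ) {s : Set ℝ} (hs : MeasurableSet s) (hneg : -s = s) :
    μ s = 2 * μ (s ∩ Ici 0) := by
  have hpre : s \ Ici 0 = Neg.neg ⁻¹' (s ∩ Ioi 0) := by
    ext x
    simp only [mem_sdiff, mem_Ici, not_le, mem_preimage, mem_inter_iff, mem_Ioi, neg_pos]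
    rw [← Set.mem_neg, hneg]
  rw [← measure_inter_add_sdiff s measurableSet_Ici, hpre,
    ← Measure.map_apply measurable_neg (hs.inter measurableSet_Ioi), hμ,
    measure_congr ((ae_eq_refl s).inter Ioi_ae_eq_Ici), two_mul]

section StandardGaussian

lemma antitoneOn_gaussianPDF (v : ℝ≥0) : AntitoneOn (gaussianPDF 0 v) (Ici 0) := by
  intro x hx y _ hxy
  simp only [gaussianPDF, gaussianPDFReal, sub_zero]
  gcongr

lemma gaussianPDFReal_zero_le : gaussianPDFReal 0 1 0 ≤ 1 / 2 := by
  have : 2 ≤ √(2 * π) := Real.le_sqrt_of_sq_le (by nlinarith [Real.pi_gt_three])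
  calc gaussianPDFReal 0 1 0 = (√(2 * π))⁻¹ := by simp [gaussianPDFReal]
    _ ≤ 1 / 2 := by rw [one_div]; exact inv_anti₀ two_pos this

lemma gaussianReal_eq_two_mul_inter_Ici {s : Set ℝ} (hs : MeasurableSet s) (hneg : -s = s) :
    gaussianReal 0 1 s = 2 * gaussianReal 0 1 (s ∩ Ici 0) :=
  have := nullSingletonClass_gaussianReal (μ := 0) one_ne_zero
  measure_eq_two_mul_measure_inter_Ici (by simpa using gaussianReal_map_neg (μ := 0) (v := 1))
    hs hneg

lemma gaussianReal_Ici_zero : gaussianReal 0 1 (Ici 0) = ENNReal.ofReal (1 / 2) := by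
  have h := gaussianReal_eq_two_mul_inter_Ici MeasurableSet.univ neg_univ
  rw [measure_univ, univ_inter] at h
  rw [ENNReal.ofReal_div_of_pos two_pos, ENNReal.ofReal_one, ENNReal.ofReal_ofNat,
    ENNReal.eq_div_iff two_ne_zero ENNReal.ofNat_ne_top, ← h]

lemma abs_gaussianReal_real_sub_le {s : Set ℝ} (hs : MeasurableSet s) (hneg : -s = s)
    {ρ p : ℝ} (hρ0 : 0 ≤ ρ) (hρ1 : ρ ≤ 1) (hp : 0 < p)
    (hvol : ∀ k : ℕ, volume (s ∩ Ico (k * p) ((k + 1) * p)) = ENNReal.ofReal ρ * ENNReal.ofReal p) :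
    |(gaussianReal 0 1).real s - ρ| ≤ p := by
  have herr : ENNReal.ofReal ρ * (gaussianPDF 0 1 0 * ENNReal.ofReal p) ≤
      ENNReal.ofReal (p / 2) := by
    rw [gaussianPDF, ← ENNReal.ofReal_mul (gaussianPDFReal_nonneg _ _ _), ← ENNReal.ofReal_mul hρ0]
    refine ENNReal.ofReal_le_ofReal ?_
    calc ρ * (gaussianPDFReal 0 1 0 * p) ≤ 1 * (1 / 2 * p) := by
          have := gaussianPDFReal_nonneg 0 1 0
          gcongr
          exact gaussianPDFReal_zero_le
      _ = p / 2 := by ring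
  have hU := withDensity_inter_Ici_le (antitoneOn_gaussianPDF 1) hp hs (fun k => (hvol k).le)
  have hL := mul_withDensity_Ici_le (antitoneOn_gaussianPDF 1) hp hs (fun k => (hvol k).ge)
  rw [← gaussianReal_of_var_ne_zero 0 one_ne_zero, gaussianReal_Ici_zero,
    ← ENNReal.ofReal_mul hρ0] at hU hL
  replace hU := hU.trans (add_le_add le_rfl herr)
  rw [← ENNReal.ofReal_add (by positivity) (by positivity)] at hU
  replace hU := ENNReal.toReal_le_of_le_ofReal (by positivity) hU
  replace hL := ENNReal.toReal_mono (by finiteness) (hL.trans (add_le_add le_rfl herr))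
  rw [ENNReal.toReal_add (by finiteness) (by finiteness), ENNReal.toReal_ofReal (by positivity),
    ENNReal.toReal_ofReal (by positivity)] at hL
  rw [measureReal_def, gaussianReal_eq_two_mul_inter_Ici hs hneg, ENNReal.toReal_mul,
    abs_sub_le_iff]
  constructor <;> simp <;> linarith

lemma abs_gaussianReal_cosSublevel_sub_le {ε a : ℝ} (hε : 0 < ε) (ha : a ∈ Ioc 0 π) :
    |(gaussianReal 0 1).real (cosSublevel ε a) - (1 - a / π)| ≤ 2 * π * ε := by
  have hρ0 : 0 ≤ 1 - a / π := by rw [sub_nonneg, div_le_one pi_pos]; exact ha.2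
  refine abs_gaussianReal_real_sub_le measurableSet_cosSublevel neg_cosSublevel hρ0
    (by linarith [div_nonneg ha.1.le pi_pos.le]) (by positivity) fun k => ?_
  rw [cosSublevel_inter_Ico hε ha, Real.volume_Icc, ← ENNReal.ofReal_mul hρ0]
  congr 1
  field_simp
  ring

end StandardGaussian
lemma integral_sub_integral_le_of_abs_sub_le {Ω : Type*} [MeasurableSpace Ω] {μ : Measure Ω}
    [IsProbabilityMeasure μ] {g h : Ω → ℝ} {ε : ℝ} (hg : AEStronglyMeasurable g μ)
    (hh : AEStronglyMeasurable h μ) (hgh : ∀ x, |g x - h x| ≤ ε) :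
    ∫ x, g x ∂μ - ∫ x, h x ∂μ ≤ ε := by
  have hε : 0 ≤ ε := (abs_nonneg _).trans (hgh (nonempty_of_isProbabilityMeasure μ).some)
  have hdiff : Integrable (g - h) μ :=
    .of_bound (hg.sub hh) ε (.of_forall hgh)
  by_cases hgi : Integrable g μ
  · have hhi : Integrable h μ := by simpa using hgi.sub hdiff
    rw [← integral_sub hgi hhi]
    calc ∫ x, g x - h x ∂μ ≤ ‖∫ x, g x - h x ∂μ‖ := le_norm_self _
      _ ≤ ε * μ.real univ := norm_integral_le_of_norm_le_const (.of_forall hgh)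
      _ = ε := by simp
  · have hhi : ¬ Integrable h μ := fun hhi => hgi (by simpa using hhi.add hdiff)
    simpa [integral_undef hgi, integral_undef hhi] using hε

lemma W1_map_le {P : Measure ℝ} [IsProbabilityMeasure P] {f : ℝ → ℝ} {ε : ℝ}
    (hf : ∀ x, |f x - x| ≤ ε) : W1 P (P.map f) ≤ ε := by
  have hε : 0 ≤ ε := (abs_nonneg _).trans (hf 0)
  by_cases hfm : AEMeasurable f P
  · refine Real.iSup_le (fun g => ?_) hε
    have hgc := g.2.continuous
    rw [integral_map hfm hgc.aestronglyMeasurable]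
    refine integral_sub_integral_le_of_abs_sub_le hgc.aestronglyMeasurable
      (hgc.comp_aestronglyMeasurable hfm.aestronglyMeasurable) fun x => ?_
    calc |g.1 x - g.1 (f x)| = dist (g.1 x) (g.1 (f x)) := (Real.dist_eq _ _).symm
      _ ≤ 1 * dist x (f x) := g.2.dist_le_mul x (f x)
      _ ≤ ε := by simpa [Real.dist_eq, abs_sub_comm] using hf x
  · -- junk value: `P.map f = 0`, and constant test functions make the supremum unbounded
    rw [Measure.map_of_not_aemeasurable hfm, W1, Real.iSup_of_not_bddAbove]
    · exact hε
    rintro ⟨M, hM⟩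
    have := hM ⟨⟨fun _ => M + 1, .const' _⟩, rfl⟩
    norm_num at this

section TotalVariation

variable {P Q : Measure ℝ}

lemma abs_toReal_sub_le_one [IsZeroOrProbabilityMeasure P] [IsZeroOrProbabilityMeasure Q]
    (A : Set ℝ) : |(P A).toReal - (Q A).toReal| ≤ 1 :=
  abs_sub_le_of_nonneg_of_le ENNReal.toReal_nonneg measureReal_le_one
    ENNReal.toReal_nonneg measureReal_le_one

lemma TV_le_one [IsZeroOrProbabilityMeasure P] [IsZeroOrProbabilityMeasure Q] : TV P Q ≤ 1 :=
  Real.iSup_le (fun A => abs_toReal_sub_le_one A.1) zero_le_one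

lemma abs_sub_le_TV [IsZeroOrProbabilityMeasure P] [IsZeroOrProbabilityMeasure Q] {A : Set ℝ}
    (hA : MeasurableSet A) : |(P A).toReal - (Q A).toReal| ≤ TV P Q :=
  le_ciSup (f := fun A : {A : Set ℝ // MeasurableSet A} => |(P A.1).toReal - (Q A.1).toReal|)
    ⟨1, forall_mem_range.2 fun A => abs_toReal_sub_le_one A.1⟩ ⟨A, hA⟩

lemma sub_le_TV_map [IsProbabilityMeasure P] {f : ℝ → ℝ} {A B : Set ℝ} (hA : MeasurableSet A)
    (hBA : B ⊆ f ⁻¹' A) : P.real B - P.real A ≤ TV P (P.map f) := by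
  by_cases hf : AEMeasurable f P
  · calc P.real B - P.real A ≤ (P.map f).real A - P.real A := by
          rw [map_measureReal_apply_of_aemeasurable hf hA]
          exact sub_le_sub_right (measureReal_mono hBA) _
      _ ≤ |(P A).toReal - ((P.map f) A).toReal| := by
          rw [abs_sub_comm]; exact le_abs_self _
      _ ≤ TV P (P.map f) := abs_sub_le_TV hA
  · -- junk value: `P.map f = 0`, so `univ` already witnesses `TV = 1`
    calc P.real B - P.real A ≤ 1 := by
          linarith [measureReal_le_one (μ := P) (s := B), measureReal_nonneg (μ := P) (s := A)]
      _ = |(P univ).toReal - ((P.map f) univ).toReal| := by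
          simp [Measure.map_of_not_aemeasurable hf]
      _ ≤ TV P (P.map f) := abs_sub_le_TV MeasurableSet.univ

end TotalVariation

lemma one_tenth_le_TV_map_flow {ε : ℝ} (hε : 0 < ε) (hε' : ε ≤ 1 / 200) {Ψ : ℝ → ℝ → ℝ}
    (hΨ0 : ∀ x, Ψ 0 x = x)
    (hΨ : ∀ x, ∀ t ∈ Icc (0 : ℝ) 1, HasDerivAt (fun s => Ψ s x) (ε * sin (Ψ t x / ε)) t) :
    1 / 10 ≤ TV (gaussianReal 0 1) ((gaussianReal 0 1).map (Ψ 1)) := by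
  have hB := abs_gaussianReal_cosSublevel_sub_le hε (a := 1) ⟨one_pos, by linarith [pi_gt_three]⟩
  have hA := abs_gaussianReal_cosSublevel_sub_le hε (a := π / 2)
    ⟨by positivity, by linarith [pi_pos]⟩
  have hTV := sub_le_TV_map (P := gaussianReal 0 1) (B := cosSublevel ε 1)
    measurableSet_cosSublevel fun x hx => flow_mem_cosSublevel hε.ne' (hΨ x) (by rwa [hΨ0])
  have hhalf : π / 2 / π = 1 / 2 := by field_simp
  have hinv : 1 / π < 1 / 3 := one_div_lt_one_div_of_lt three_pos pi_gt_three
  have hπε : π * ε ≤ 3.15 * (1 / 200) := mul_le_mul pi_lt_d2.le hε' hε.le (by norm_num)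
  rw [hhalf] at hA
  rw [abs_le] at hA hB
  linarith

/-- **Total variation is unsuitable for evaluating Flow Matching.**
Let `d = 1`, `Z ∼ N(0,1)`, `ε > 0`, and consider the vector fields `v^{(1)}_t(x) = 0` and
`v^{(2)}_t(x) = ε sin(x/ε)` with respective flows `ψ^{(1)}` and `ψ^{(2)}` (solutions of
`(d/dt)ψ_t(x) = v_t(ψ_t(x))`, `ψ_0(x) = x`). Then `‖v^{(1)} − v^{(2)}‖_∞ ≤ ε`,
`W₁(law(ψ^{(1)}_1(Z)), law(ψ^{(2)}_1(Z))) ≤ ε`, and there is a constant `c > 0` such that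
`liminf_{ε→0⁺} TV(law(ψ^{(1)}_1(Z)), law(ψ^{(2)}_1(Z))) ≥ c`. -/
theorem tv_unsuitable_for_flow_matching :
    ∃ c : ℝ, 0 < c ∧
      ∀ (Ψ₁ : ℝ → ℝ → ℝ) (Ψ₂ : ℝ → ℝ → ℝ → ℝ),
        ((∀ x, Ψ₁ 0 x = x) ∧
          ∀ x, ∀ t ∈ Set.Icc (0:ℝ) 1, HasDerivAt (fun s => Ψ₁ s x) 0 t) →
        (∀ ε : ℝ, 0 < ε → (∀ x, Ψ₂ ε 0 x = x) ∧
          ∀ x, ∀ t ∈ Set.Icc (0:ℝ) 1,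
            HasDerivAt (fun s => Ψ₂ ε s x) (ε * Real.sin (Ψ₂ ε t x / ε)) t) →
        (∀ ε : ℝ, 0 < ε → ∀ t ∈ Set.Icc (0:ℝ) 1, ∀ x : ℝ,
            |(0:ℝ) - ε * Real.sin (x / ε)| ≤ ε) ∧
        (∀ ε : ℝ, 0 < ε →
            W1 (Measure.map (Ψ₁ 1) (gaussianReal 0 1))
              (Measure.map (Ψ₂ ε 1) (gaussianReal 0 1)) ≤ ε) ∧
        c ≤ Filter.liminf
              (fun ε => TV (Measure.map (Ψ₁ 1) (gaussianReal 0 1))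
                (Measure.map (Ψ₂ ε 1) (gaussianReal 0 1)))
              (nhdsWithin 0 (Set.Ioi 0)) := by
  refine ⟨1 / 10, by norm_num, fun Ψ₁ Ψ₂ ⟨hΨ₁0, hΨ₁⟩ hΨ₂ => ?_⟩
  have hsin (ε x : ℝ) (hε : 0 < ε) : |ε * sin x| ≤ ε := by
    rw [abs_mul, abs_of_pos hε]; exact mul_le_of_le_one_right hε.le (abs_sin_le_one x)
  have hid : (gaussianReal 0 1).map (Ψ₁ 1) = gaussianReal 0 1 := by
    have h (x : ℝ) : Ψ₁ 1 x = x := by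
      simpa [hΨ₁0, sub_eq_zero] using
        abs_sub_le_of_hasDerivAt zero_le_one (hΨ₁ x) fun _ _ => abs_zero.le
    rw [show Ψ₁ 1 = id from funext h, Measure.map_id]
  refine ⟨fun ε hε _ _ x => by simpa using hsin ε (x / ε) hε, fun ε hε => ?_, ?_⟩
  · rw [hid]
    refine W1_map_le fun x => ?_
    simpa [(hΨ₂ ε hε).1 x] using
      abs_sub_le_of_hasDerivAt zero_le_one ((hΨ₂ ε hε).2 x) fun t _ => hsin ε _ hε
  · simp only [hid]
    refine Filter.le_liminf_of_le (Filter.isCoboundedUnder_ge_of_le _ fun _ => TV_le_one) ?_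
    filter_upwards [Ioc_mem_nhdsGT (by norm_num : (0 : ℝ) < 1 / 200)] with ε ⟨hε, hε'⟩
    exact one_tenth_le_TV_map_flow hε hε' (hΨ₂ ε hε).1 (hΨ₂ ε hε).2

end
end

section
/- Let α ∈ (0,1], Λ > 0 and let p* be a probability density on ℝ^d with ∫|p*(x+h) − p*(x)| dx ≤ Λ|h|^α for all h ∈ ℝ^d. Let K be a nonnegative probability density on ℝ^d with ∫ y K(y) dy = 0 and m := ∫ |y|^{1+α} K(y) dy < ∞, and set K_σ(x) = σ^{-d} K(x/σ). Then there is a constant C depending only on d, Λ and m such that for every σ > 0 and every 1-Lipschitz function f : ℝ^d → ℝ, ∫ f(z) (p*(z) − (K_σ ∗ p*)(z)) dz ≤ C σ^{1+α}. -/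
/-!
For bounded `f`, Fubini turns the bias into an average of translates:
`∫ f (p − Q ⋆ p) = ∫ Q(w) A(w) dw` with `A(w) = ∫ (f z − f (z + w)) p z dz`; the case of
unbounded `f` follows by truncation. Because `f` is 1-Lipschitz and `p` is Hölder in `L¹`, `A` is additive up to
`|A(u + v) − A u − A v| ≤ Λ ‖u‖^α ‖v‖`, so the dyadic limits `2ⁿ A(2⁻ⁿ w)` define a continuous linear
map `L` with `|A − L| ≤ Λ / (2 (2^α − 1)) ‖w‖^(1+α)`. The kernel has mean zero, so `∫ Q L = 0`, and
what remains is bounded by the `(1 + α)`-th moment of `Q = K_σ`, which is `σ^(1+α) m`.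
-/

open MeasureTheory Filter Topology NNReal

section ApproxAdditive

variable {E F : Type*} [NormedAddCommGroup E] [NormedSpace ℝ E]
  [NormedAddCommGroup F] [NormedSpace ℝ F]

noncomputable def dyadicBlowup (A : E → F) (n : ℕ) (w : E) : F :=
  (2 : ℝ) ^ n • A ((2 : ℝ)⁻¹ ^ n • w)

variable {A : E → F} {M α : ℝ}

lemma norm_dyadicBlowup_add_sub_le
    (hA : ∀ u v, ‖A (u + v) - A u - A v‖ ≤ M * (‖u‖ ^ α * ‖v‖)) (n : ℕ) (u v : E) :
    ‖dyadicBlowup A n (u + v) - dyadicBlowup A n u - dyadicBlowup A n v‖ ≤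
      M * (‖u‖ ^ α * ‖v‖) * ((2 : ℝ)⁻¹ ^ α) ^ n := by
  have hs : ‖((2 : ℝ)⁻¹ ^ n)‖ = (2 : ℝ)⁻¹ ^ n := by simp
  have hsα : ((2 : ℝ)⁻¹ ^ n) ^ α = ((2 : ℝ)⁻¹ ^ α) ^ n := by
    rw [← Real.rpow_natCast, ← Real.rpow_natCast, ← Real.rpow_mul (by norm_num),
      ← Real.rpow_mul (by norm_num), mul_comm]
  calc ‖dyadicBlowup A n (u + v) - dyadicBlowup A n u - dyadicBlowup A n v‖
      = 2 ^ n * ‖A ((2 : ℝ)⁻¹ ^ n • u + (2 : ℝ)⁻¹ ^ n • v) - A ((2 : ℝ)⁻¹ ^ n • u)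
          - A ((2 : ℝ)⁻¹ ^ n • v)‖ := by
        simp [dyadicBlowup, smul_add, ← smul_sub, norm_smul]
    _ ≤ 2 ^ n * (M * (‖(2 : ℝ)⁻¹ ^ n • u‖ ^ α * ‖(2 : ℝ)⁻¹ ^ n • v‖)) := by gcongr; exact hA _ _
    _ = M * (‖u‖ ^ α * ‖v‖) * ((2 : ℝ)⁻¹ ^ α) ^ n := by
        have h2 : (2 : ℝ) ^ n * (2 : ℝ)⁻¹ ^ n = 1 := by rw [← mul_pow]; norm_num
        rw [norm_smul, norm_smul, hs, Real.mul_rpow (by positivity) (norm_nonneg _), hsα]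
        linear_combination (M * ‖u‖ ^ α * ‖v‖ * ((2 : ℝ)⁻¹ ^ α) ^ n) * h2

lemma dist_dyadicBlowup_succ_le
    (hA : ∀ u v, ‖A (u + v) - A u - A v‖ ≤ M * (‖u‖ ^ α * ‖v‖)) (w : E) (n : ℕ) :
    dist (dyadicBlowup A n w) (dyadicBlowup A (n + 1) w) ≤
      M * (‖w‖ ^ α * ‖w‖) * (2 : ℝ)⁻¹ ^ α / 2 * ((2 : ℝ)⁻¹ ^ α) ^ n := by
  have hhalf : (2 : ℝ)⁻¹ • w + (2 : ℝ)⁻¹ • w = w := by rw [← add_smul]; norm_num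
  have hsucc : dyadicBlowup A (n + 1) w = dyadicBlowup A n ((2 : ℝ)⁻¹ • w)
      + dyadicBlowup A n ((2 : ℝ)⁻¹ • w) := by
    rw [← two_smul ℝ, dyadicBlowup, dyadicBlowup, smul_smul, smul_smul, ← pow_succ, ← pow_succ']
  have h := norm_dyadicBlowup_add_sub_le hA n ((2 : ℝ)⁻¹ • w) ((2 : ℝ)⁻¹ • w)
  rw [hhalf, sub_sub, ← hsucc, ← dist_eq_norm, norm_smul,
    Real.mul_rpow (by norm_num) (norm_nonneg _)] at h
  refine h.trans_eq ?_
  rw [norm_inv, Real.norm_ofNat]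
  ring

lemma norm_dyadicBlowup_le {C : ℝ} (hAC : ∀ w, ‖A w‖ ≤ C * ‖w‖) (n : ℕ) (w : E) :
    ‖dyadicBlowup A n w‖ ≤ C * ‖w‖ := by
  have h2 : (2 : ℝ) ^ n * (2 : ℝ)⁻¹ ^ n = 1 := by rw [← mul_pow]; norm_num
  calc ‖dyadicBlowup A n w‖ ≤ 2 ^ n * (C * ‖(2 : ℝ)⁻¹ ^ n • w‖) := by
        rw [dyadicBlowup, norm_smul]; simp only [norm_pow, RCLike.norm_ofNat]; gcongr; exact hAC _
    _ = C * ‖w‖ := by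
        rw [norm_smul]; simp only [norm_pow, norm_inv, RCLike.norm_ofNat]
        linear_combination (C * ‖w‖) * h2

lemma eq_add_of_tendsto_dyadicBlowup (hα : 0 < α)
    (hA : ∀ u v, ‖A (u + v) - A u - A v‖ ≤ M * (‖u‖ ^ α * ‖v‖)) {u v : E} {a b c : F}
    (ha : Tendsto (dyadicBlowup A · (u + v)) atTop (𝓝 a))
    (hb : Tendsto (dyadicBlowup A · u) atTop (𝓝 b))
    (hc : Tendsto (dyadicBlowup A · v) atTop (𝓝 c)) : a = b + c := by
  have hr : Tendsto (fun n : ℕ ↦ ((2 : ℝ)⁻¹ ^ α) ^ n) atTop (𝓝 0) :=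
    tendsto_pow_atTop_nhds_zero_of_lt_one (by positivity)
      (Real.rpow_lt_one (by norm_num) (by norm_num) hα)
  have h0 : Tendsto (fun n ↦ dyadicBlowup A n (u + v) - dyadicBlowup A n u
      - dyadicBlowup A n v) atTop (𝓝 0) :=
    squeeze_zero_norm (norm_dyadicBlowup_add_sub_le hA · u v) (by simpa using hr.const_mul _)
  rw [← sub_eq_zero, ← sub_sub, ← tendsto_nhds_unique ((ha.sub hb).sub hc) h0]

theorem exists_continuousLinearMap_norm_sub_le [CompleteSpace F] (hα : 0 < α)
    (hA : ∀ u v, ‖A (u + v) - A u - A v‖ ≤ M * (‖u‖ ^ α * ‖v‖)) {C : ℝ}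
    (hAC : ∀ w, ‖A w‖ ≤ C * ‖w‖) :
    ∃ L : E →L[ℝ] F, ∀ w, ‖A w - L w‖ ≤ M / (2 * (2 ^ α - 1)) * ‖w‖ ^ (1 + α) := by
  set r : ℝ := (2 : ℝ)⁻¹ ^ α with hr
  have hr1 : r < 1 := Real.rpow_lt_one (by norm_num) (by norm_num) hα
  have hlim (w : E) : ∃ l, Tendsto (fun n ↦ dyadicBlowup A n w) atTop (𝓝 l) :=
    cauchySeq_tendsto_of_complete <|
      cauchySeq_of_le_geometric r _ hr1 (dist_dyadicBlowup_succ_le hA w)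
  choose L hL using hlim
  have hadd (u v : E) : L (u + v) = L u + L v :=
    eq_add_of_tendsto_dyadicBlowup hα hA (hL (u + v)) (hL u) (hL v)
  let L' : E →+ F := AddMonoidHom.mk' L hadd
  have hL'C (w : E) : ‖L' w‖ ≤ C * ‖w‖ :=
    le_of_tendsto' (hL w).norm (norm_dyadicBlowup_le hAC · w)
  refine ⟨L'.toRealLinearMap (AddMonoidHomClass.continuous_of_bound L' C hL'C), fun w ↦ ?_⟩
  have h := dist_le_of_le_geometric_of_tendsto₀ r _ hr1 (dist_dyadicBlowup_succ_le hA w) (hL w)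
  rw [dist_eq_norm] at h
  simp only [dyadicBlowup, pow_zero, one_smul] at h
  refine h.trans_eq ?_
  have h2α : (2 : ℝ) ^ α * r = 1 := by
    rw [hr, ← Real.mul_rpow (by norm_num) (by norm_num)]; norm_num
  have h2α1 : 0 < (2 : ℝ) ^ α - 1 := by
    have := Real.one_lt_rpow (by norm_num : (1 : ℝ) < 2) hα; linarith
  rw [Real.rpow_one_add' (norm_nonneg w) (by positivity), div_div, div_mul_eq_mul_div,
    div_eq_div_iff (by linarith) (by positivity)]
  linear_combination (2 * M * ‖w‖ ^ α * ‖w‖) * h2α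

end ApproxAdditive

lemma abs_max_neg_min_le {n : ℝ} (hn : 0 ≤ n) (t : ℝ) : |max (-n) (min n t)| ≤ min n |t| := by
  grind [abs_le]

lemma integral_lipschitz_mul_le_of_bounded {X : Type*} [PseudoMetricSpace X] [MeasurableSpace X]
    [OpensMeasurableSpace X] {μ : Measure X} {h : X → ℝ} (hh : AEStronglyMeasurable h μ)
    {B : ℝ} (hB : 0 ≤ B) {K : ℝ≥0}
    (hbdd : ∀ g : X → ℝ, LipschitzWith K g → (∃ R, ∀ x, |g x| ≤ R) → ∫ x, g x * h x ∂μ ≤ B)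
    {f : X → ℝ} (hf : LipschitzWith K f) : ∫ x, f x * h x ∂μ ≤ B := by
  by_cases hI : Integrable (fun x ↦ f x * h x) μ
  swap
  · rwa [integral_undef hI]
  let trunc (n : ℕ) (x : X) : ℝ := max (-n) (min n (f x))
  have htrunc_abs (n : ℕ) (x : X) : |trunc n x| ≤ min (n : ℝ) |f x| :=
    abs_max_neg_min_le n.cast_nonneg _
  have htrunc_eq (x : X) : ∀ᶠ n : ℕ in atTop, trunc n x = f x := by
    filter_upwards [eventually_ge_atTop ⌈|f x|⌉₊] with n hn
    have hfn : |f x| ≤ n := (Nat.le_ceil _).trans (Nat.cast_le.mpr hn)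
    simp only [trunc]
    rw [min_eq_right ((le_abs_self _).trans hfn),
      max_eq_right ((neg_le_neg hfn).trans (neg_abs_le _))]
  have hlim : Tendsto (fun n : ℕ ↦ ∫ x, trunc n x * h x ∂μ) atTop (𝓝 (∫ x, f x * h x ∂μ)) := by
    refine tendsto_integral_of_dominated_convergence (fun x ↦ |f x * h x|)
      (fun n ↦ ((hf.const_min _).const_max _).continuous.aestronglyMeasurable.mul hh) hI.abs
      (fun n ↦ ae_of_all _ fun x ↦ ?_) (ae_of_all _ fun x ↦ ?_)
    · rw [Real.norm_eq_abs, abs_mul, abs_mul]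
      exact mul_le_mul_of_nonneg_right ((htrunc_abs n x).trans (min_le_right _ _)) (abs_nonneg _)
    · exact tendsto_const_nhds.congr' ((htrunc_eq x).mono fun n hn ↦ by simp only [hn])
  exact le_of_tendsto' hlim fun n ↦ hbdd _ ((hf.const_min _).const_max _)
    ⟨n, fun x ↦ (htrunc_abs n x).trans (min_le_left _ _)⟩

lemma LipschitzWith.abs_sub_add_le {E : Type*} [SeminormedAddCommGroup E] {g : E → ℝ}
    (hg : LipschitzWith 1 g) (z u v : E) : |g (z + u) - g (z + v)| ≤ ‖u - v‖ := by
  simpa [dist_eq_norm] using hg.dist_le_mul (z + u) (z + v)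

section ShiftDefect

variable {E : Type*} [NormedAddCommGroup E] [MeasurableSpace E] [BorelSpace E] {μ : Measure E}
  {p g : E → ℝ}

noncomputable def shiftDefect (μ : Measure E) (p g : E → ℝ) (w : E) : ℝ :=
  ∫ z, (g z - g (z + w)) * p z ∂μ

lemma integrable_sub_shift_mul (hg : LipschitzWith 1 g) {q : E → ℝ} (hq : Integrable q μ)
    (u v : E) : Integrable (fun z ↦ (g (z + u) - g (z + v)) * q z) μ :=
  hq.bdd_mul (c := ‖u - v‖)
    ((hg.continuous.comp (continuous_add_const u)).sub
      (hg.continuous.comp (continuous_add_const v))).aestronglyMeasurable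
    (ae_of_all _ fun z ↦ hg.abs_sub_add_le z u v)

lemma abs_integral_sub_shift_mul_le (hg : LipschitzWith 1 g) {q : E → ℝ} (hq : Integrable q μ)
    (u v : E) : |∫ z, (g (z + u) - g (z + v)) * q z ∂μ| ≤ ‖u - v‖ * ∫ z, |q z| ∂μ := by
  rw [← integral_const_mul]
  refine (abs_integral_le_integral_abs).trans (integral_mono
    (integrable_sub_shift_mul hg hq u v).abs (hq.abs.const_mul _) fun z ↦ ?_)
  rw [abs_mul]
  exact mul_le_mul_of_nonneg_right (hg.abs_sub_add_le z u v) (abs_nonneg _)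

lemma shiftDefect_sub_shiftDefect (hg : LipschitzWith 1 g) (hp : Integrable p μ) (u v : E) :
    shiftDefect μ p g u - shiftDefect μ p g v = ∫ z, (g (z + v) - g (z + u)) * p z ∂μ := by
  have h := integrable_sub_shift_mul hg hp
  rw [shiftDefect, shiftDefect, ← integral_sub (by simpa using h 0 u) (by simpa using h 0 v)]
  congr 1 with z
  ring

lemma abs_shiftDefect_sub_le (hg : LipschitzWith 1 g) (hp : Integrable p μ) (u v : E) :
    |shiftDefect μ p g u - shiftDefect μ p g v| ≤ (∫ z, |p z| ∂μ) * ‖u - v‖ := by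
  rw [shiftDefect_sub_shiftDefect hg hp, mul_comm, ← norm_neg (u - v), neg_sub]
  exact abs_integral_sub_shift_mul_le hg hp v u

lemma abs_shiftDefect_le (hg : LipschitzWith 1 g) (hp : Integrable p μ) (w : E) :
    |shiftDefect μ p g w| ≤ (∫ z, |p z| ∂μ) * ‖w‖ := by
  simpa [shiftDefect] using abs_shiftDefect_sub_le hg hp w 0

lemma continuous_shiftDefect (hg : LipschitzWith 1 g) (hp : Integrable p μ) :
    Continuous (shiftDefect μ p g) :=
  (LipschitzWith.of_dist_le' fun u v ↦ by
    simpa [Real.dist_eq, dist_eq_norm] using abs_shiftDefect_sub_le hg hp u v).continuous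

lemma abs_shiftDefect_add_sub_le [μ.IsAddRightInvariant] (hg : LipschitzWith 1 g)
    (hp : Integrable p μ) {Λ α : ℝ} (hpH : ∀ h : E, ∫ x, |p (x + h) - p x| ∂μ ≤ Λ * ‖h‖ ^ α)
    (u v : E) :
    |shiftDefect μ p g (u + v) - shiftDefect μ p g u - shiftDefect μ p g v| ≤
      Λ * (‖u‖ ^ α * ‖v‖) := by
  -- `A (u + v) - A u` is the defect of `v` measured against the translate `p (· - u)`.
  have hshift : shiftDefect μ p g (u + v) - shiftDefect μ p g u
      = ∫ z, (g (z + 0) - g (z + v)) * p (z + -u) ∂μ := by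
    rw [shiftDefect_sub_shiftDefect hg hp,
      ← integral_add_right_eq_self (fun z ↦ (g (z + 0) - g (z + v)) * p (z + -u)) u]
    simp [add_assoc, add_comm u v]
  have hp' : Integrable (fun z ↦ p (z + -u) - p z) μ := (hp.comp_add_right _).sub hp
  rw [hshift, shiftDefect, ← integral_sub (integrable_sub_shift_mul hg (hp.comp_add_right _) 0 v)
    (by simpa using integrable_sub_shift_mul hg hp 0 v)]
  calc |∫ z, ((g (z + 0) - g (z + v)) * p (z + -u) - (g z - g (z + v)) * p z) ∂μ|
      = |∫ z, (g (z + 0) - g (z + v)) * (p (z + -u) - p z) ∂μ| := by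
        congr 2 with z; simp only [add_zero]; ring
    _ ≤ ‖0 - v‖ * ∫ z, |p (z + -u) - p z| ∂μ := abs_integral_sub_shift_mul_le hg hp' 0 v
    _ ≤ ‖v‖ * (Λ * ‖-u‖ ^ α) := by rw [zero_sub, norm_neg]; gcongr; exact hpH (-u)
    _ = Λ * (‖u‖ ^ α * ‖v‖) := by rw [norm_neg]; ring

lemma integral_mul_sub_sub_eq_shiftDefect [μ.IsAddRightInvariant] (hp : Integrable p μ)
    (hg : Continuous g) {R : ℝ} (hgR : ∀ z, |g z| ≤ R) (w : E) :
    ∫ z, g z * (p z - p (z - w)) ∂μ = shiftDefect μ p g w := by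
  have hbdd (w : E) : Integrable (fun z ↦ g (z + w) * p z) μ :=
    hp.bdd_mul (hg.comp (continuous_add_const w)).aestronglyMeasurable
      (ae_of_all _ fun z ↦ hgR _)
  calc ∫ z, g z * (p z - p (z - w)) ∂μ
      = ∫ z, (g (z + 0) * p z - g (z - w + w) * p (z - w)) ∂μ := by
        congr 1 with z; simp only [add_zero, sub_add_cancel]; ring
    _ = ∫ z, g (z + 0) * p z ∂μ - ∫ z, g (z + w) * p z ∂μ := by
        rw [integral_sub (hbdd 0) ((hbdd w).comp_sub_right w),
          integral_sub_right_eq_self (fun z ↦ g (z + w) * p z) w]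
    _ = shiftDefect μ p g w := by
        rw [shiftDefect, ← integral_sub (hbdd 0) (hbdd w)]
        congr 1 with z; simp only [add_zero]; ring

end ShiftDefect

lemma le_one_add_rpow_one_add {α : ℝ} (hα : 0 ≤ α) {t : ℝ} (ht : 0 ≤ t) : t ≤ 1 + t ^ (1 + α) := by
  rcases le_total t 1 with h | h
  · linarith [Real.rpow_nonneg ht (1 + α)]
  · linarith [Real.self_le_rpow_of_one_le h (by linarith : (1 : ℝ) ≤ 1 + α)]

section Smoothing

variable {E : Type*} [NormedAddCommGroup E] [NormedSpace ℝ E] [FiniteDimensional ℝ E]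
  [MeasurableSpace E] [BorelSpace E] {μ : Measure E} {p Q g : E → ℝ}

lemma integrable_smul_self_of_integrable_rpow_mul {α : ℝ} (hα : 0 ≤ α) (hQ : Integrable Q μ)
    (hQm : Integrable (fun w ↦ ‖w‖ ^ (1 + α) * Q w) μ) : Integrable (fun w ↦ Q w • w) μ := by
  refine (hQ.norm.add hQm.norm).mono' (hQ.aestronglyMeasurable.smul aestronglyMeasurable_id)
    (ae_of_all _ fun w ↦ ?_)
  rw [Pi.add_apply, norm_smul, norm_mul, Real.norm_of_nonneg (by positivity : 0 ≤ ‖w‖ ^ (1 + α))]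
  nlinarith [le_one_add_rpow_one_add hα (norm_nonneg w), norm_nonneg (Q w)]

variable [μ.IsAddHaarMeasure]

lemma integral_mul_sub_conv_eq_integral_mul_shiftDefect (hp : Integrable p μ)
    (hQ : Integrable Q μ) (hQ1 : ∫ w, Q w ∂μ = 1) (hg : Continuous g) {R : ℝ}
    (hgR : ∀ z, |g z| ≤ R) :
    ∫ z, g z * (p z - ∫ y, Q (z - y) * p y ∂μ) ∂μ = ∫ w, Q w * shiftDefect μ p g w ∂μ := by
  have hconv : Integrable (fun zw : E × E ↦ Q zw.2 * p (zw.1 - zw.2)) (μ.prod μ) :=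
    hQ.convolution_integrand (ContinuousLinearMap.mul ℝ ℝ) hp
  have hF : Integrable (fun zw : E × E ↦ Q zw.2 * (g zw.1 * (p zw.1 - p (zw.1 - zw.2))))
      (μ.prod μ) := by
    have h1 := (hp.bdd_mul hg.aestronglyMeasurable (ae_of_all _ hgR)).mul_prod hQ
    have h2 := hconv.bdd_mul (hg.comp continuous_fst).aestronglyMeasurable
      (ae_of_all _ fun zw ↦ hgR zw.1)
    exact (h1.sub h2).congr
      (ae_of_all _ fun zw ↦ by simp only [Pi.sub_apply, Function.comp_apply]; ring)
  have hz : ∀ᵐ z ∂μ, ∫ w, Q w * (g z * (p z - p (z - w))) ∂μ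
      = g z * (p z - ∫ y, Q (z - y) * p y ∂μ) := by
    filter_upwards [hconv.prod_right_ae] with z hz
    have hswap : ∫ w, Q w * p (z - w) ∂μ = ∫ y, Q (z - y) * p y ∂μ := by
      simpa using integral_sub_left_eq_self (fun y ↦ Q (z - y) * p y) μ z
    calc ∫ w, Q w * (g z * (p z - p (z - w))) ∂μ
        = ∫ w, (g z * p z * Q w - g z * (Q w * p (z - w))) ∂μ := by
          congr 1 with w; ring
      _ = g z * (p z - ∫ y, Q (z - y) * p y ∂μ) := by
          rw [integral_sub (hQ.const_mul _) (hz.const_mul _), integral_const_mul,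
            integral_const_mul, hQ1, hswap]
          ring
  rw [← integral_congr_ae hz, integral_integral_swap hF]
  congr 1 with w
  rw [integral_const_mul, integral_mul_sub_sub_eq_shiftDefect hp hg hgR]

lemma integral_mul_sub_conv_le_of_bounded {Λ α : ℝ} (hα : 0 < α) (hp : Integrable p μ)
    (hpH : ∀ h : E, ∫ x, |p (x + h) - p x| ∂μ ≤ Λ * ‖h‖ ^ α)
    (hQ0 : ∀ w, 0 ≤ Q w) (hQ : Integrable Q μ) (hQ1 : ∫ w, Q w ∂μ = 1)
    (hQmean : ∫ w, Q w • w ∂μ = 0) (hQm : Integrable (fun w ↦ ‖w‖ ^ (1 + α) * Q w) μ)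
    (hg : LipschitzWith 1 g) {R : ℝ} (hgR : ∀ z, |g z| ≤ R) :
    ∫ z, g z * (p z - ∫ y, Q (z - y) * p y ∂μ) ∂μ ≤
      Λ / (2 * (2 ^ α - 1)) * ∫ w, ‖w‖ ^ (1 + α) * Q w ∂μ := by
  set A := shiftDefect μ p g
  obtain ⟨L, hL⟩ := exists_continuousLinearMap_norm_sub_le (A := A) hα
    (fun u v ↦ abs_shiftDefect_add_sub_le hg hp hpH u v) (abs_shiftDefect_le hg hp)
  have hQw := integrable_smul_self_of_integrable_rpow_mul hα.le hQ hQm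
  have hLQ (w : E) : L (Q w • w) = Q w * L w := by rw [L.map_smul, smul_eq_mul]
  have hQL : Integrable (fun w ↦ Q w * L w) μ := by simpa only [hLQ] using L.integrable_comp hQw
  have hQL0 : ∫ w, Q w * L w ∂μ = 0 := by
    simp only [← hLQ, L.integral_comp_comm hQw, hQmean, map_zero]
  have hQA : Integrable (fun w ↦ Q w * A w) μ := by
    refine (hQw.norm.const_mul (∫ z, |p z| ∂μ)).mono'
      (hQ.aestronglyMeasurable.mul (continuous_shiftDefect hg hp).aestronglyMeasurable)
      (ae_of_all _ fun w ↦ ?_)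
    rw [norm_smul, norm_mul, mul_left_comm]
    exact mul_le_mul_of_nonneg_left (abs_shiftDefect_le hg hp w) (norm_nonneg _)
  calc ∫ z, g z * (p z - ∫ y, Q (z - y) * p y ∂μ) ∂μ
      = ∫ w, Q w * A w ∂μ :=
        integral_mul_sub_conv_eq_integral_mul_shiftDefect hp hQ hQ1 hg.continuous hgR
    _ = ∫ w, Q w * (A w - L w) ∂μ := by
        simp only [mul_sub]; rw [integral_sub hQA hQL, hQL0, sub_zero]
    _ ≤ ∫ w, Λ / (2 * (2 ^ α - 1)) * (‖w‖ ^ (1 + α) * Q w) ∂μ := by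
        refine integral_mono ((hQA.sub hQL).congr (ae_of_all _ fun w ↦ (mul_sub _ _ _).symm))
          (hQm.const_mul _) fun w ↦ ?_
        calc Q w * (A w - L w) ≤ Q w * (Λ / (2 * (2 ^ α - 1)) * ‖w‖ ^ (1 + α)) :=
              mul_le_mul_of_nonneg_left ((le_abs_self _).trans (hL w)) (hQ0 w)
          _ = _ := by ring
    _ = Λ / (2 * (2 ^ α - 1)) * ∫ w, ‖w‖ ^ (1 + α) * Q w ∂μ := integral_const_mul _ _

theorem integral_lipschitz_mul_sub_conv_le {Λ α : ℝ} (hΛ : 0 ≤ Λ) (hα : 0 < α)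
    (hp : Integrable p μ) (hpH : ∀ h : E, ∫ x, |p (x + h) - p x| ∂μ ≤ Λ * ‖h‖ ^ α)
    (hQ0 : ∀ w, 0 ≤ Q w) (hQ : Integrable Q μ) (hQ1 : ∫ w, Q w ∂μ = 1)
    (hQmean : ∫ w, Q w • w ∂μ = 0) (hQm : Integrable (fun w ↦ ‖w‖ ^ (1 + α) * Q w) μ)
    {f : E → ℝ} (hf : LipschitzWith 1 f) :
    ∫ z, f z * (p z - ∫ y, Q (z - y) * p y ∂μ) ∂μ ≤
      Λ / (2 * (2 ^ α - 1)) * ∫ w, ‖w‖ ^ (1 + α) * Q w ∂μ := by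
  have hconv : AEStronglyMeasurable (fun z ↦ ∫ y, Q (z - y) * p y ∂μ) μ := by
    simpa only [ContinuousLinearMap.mul_apply', mul_comm] using
      (hp.aestronglyMeasurable.convolution_integrand (ContinuousLinearMap.mul ℝ ℝ)
        hQ.aestronglyMeasurable).integral_prod_right'
  have h2α : 1 ≤ (2 : ℝ) ^ α := Real.one_le_rpow (by norm_num) hα.le
  have hB : 0 ≤ Λ / (2 * (2 ^ α - 1)) * ∫ w, ‖w‖ ^ (1 + α) * Q w ∂μ :=
    mul_nonneg (div_nonneg hΛ (by linarith))
      (integral_nonneg fun w ↦ mul_nonneg (by positivity) (hQ0 w))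
  exact integral_lipschitz_mul_le_of_bounded (hp.aestronglyMeasurable.sub hconv) hB
    (fun g hg ⟨_, hgR⟩ ↦ integral_mul_sub_conv_le_of_bounded hα hp hpH hQ0 hQ hQ1 hQmean hQm hg hgR)
    hf

end Smoothing

section Dilation

variable {E : Type*} [NormedAddCommGroup E] [NormedSpace ℝ E] {σ : ℝ} {K : E → ℝ}

noncomputable def dilate (σ : ℝ) (K : E → ℝ) (x : E) : ℝ :=
  (σ ^ Module.finrank ℝ E)⁻¹ * K (σ⁻¹ • x)

lemma dilate_nonneg (hK : ∀ x, 0 ≤ K x) (hσ : 0 ≤ σ) (x : E) : 0 ≤ dilate σ K x :=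
  mul_nonneg (by positivity) (hK _)

lemma norm_rpow_mul_dilate (hσ : 0 < σ) (β : ℝ) (x : E) :
    ‖x‖ ^ β * dilate σ K x =
      (σ ^ Module.finrank ℝ E)⁻¹ * (σ ^ β * (‖σ⁻¹ • x‖ ^ β * K (σ⁻¹ • x))) := by
  rw [dilate, norm_smul, Real.norm_of_nonneg (inv_nonneg.2 hσ.le),
    Real.mul_rpow (inv_nonneg.2 hσ.le) (norm_nonneg x), Real.inv_rpow hσ.le]
  field_simp

variable [FiniteDimensional ℝ E] [MeasurableSpace E] [BorelSpace E] {μ : Measure E}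
  [μ.IsAddHaarMeasure]

lemma integral_inv_pow_smul_comp_inv_smul {F : Type*} [NormedAddCommGroup F] [NormedSpace ℝ F]
    (hσ : 0 < σ) (G : E → F) :
    ∫ x, (σ ^ Module.finrank ℝ E)⁻¹ • G (σ⁻¹ • x) ∂μ = ∫ x, G x ∂μ := by
  rw [integral_smul, Measure.integral_comp_inv_smul_of_nonneg μ G hσ.le, smul_smul,
    inv_mul_cancel₀ (by positivity), one_smul]

lemma integrable_dilate (hK : Integrable K μ) (hσ : σ ≠ 0) : Integrable (dilate σ K) μ :=
  (hK.comp_smul (inv_ne_zero hσ)).const_mul _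

lemma integrable_rpow_mul_dilate {β : ℝ} (hK : Integrable (fun x ↦ ‖x‖ ^ β * K x) μ)
    (hσ : 0 < σ) : Integrable (fun x ↦ ‖x‖ ^ β * dilate σ K x) μ := by
  simp only [norm_rpow_mul_dilate hσ]
  exact ((hK.const_mul _).comp_smul (inv_ne_zero hσ.ne')).const_mul _

lemma integral_dilate (hσ : 0 < σ) : ∫ x, dilate σ K x ∂μ = ∫ x, K x ∂μ :=
  integral_inv_pow_smul_comp_inv_smul hσ K

lemma integral_dilate_smul_self (hσ : 0 < σ) :
    ∫ x, dilate σ K x • x ∂μ = σ • ∫ x, K x • x ∂μ := by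
  calc ∫ x, dilate σ K x • x ∂μ
      = ∫ x, (σ ^ Module.finrank ℝ E)⁻¹ • (σ • (K (σ⁻¹ • x) • σ⁻¹ • x)) ∂μ := by
        congr 1 with x
        rw [dilate, smul_smul, smul_smul, smul_smul]
        congr 1
        field_simp
    _ = σ • ∫ x, K x • x ∂μ := by
        rw [integral_inv_pow_smul_comp_inv_smul hσ (fun y ↦ σ • (K y • y)), integral_smul]

lemma integral_rpow_mul_dilate (hσ : 0 < σ) (β : ℝ) :
    ∫ x, ‖x‖ ^ β * dilate σ K x ∂μ = σ ^ β * ∫ x, ‖x‖ ^ β * K x ∂μ := by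
  simp only [norm_rpow_mul_dilate hσ]
  rw [← integral_const_mul]
  exact integral_inv_pow_smul_comp_inv_smul hσ (fun x ↦ σ ^ β * (‖x‖ ^ β * K x))

end Dilation

theorem kernel_smoothing_bias_bound_general (d : ℕ)
    (α Λ m : ℝ) (hα : α ∈ Set.Ioc (0:ℝ) 1) (hΛ : 0 < Λ) (hm : 0 ≤ m) :
    ∃ C : ℝ, 0 < C ∧
      ∀ (pstar K : EuclideanSpace ℝ (Fin d) → ℝ),
        (∀ x, 0 ≤ pstar x) → Integrable pstar → (∫ x, pstar x = 1) →
        (∀ h : EuclideanSpace ℝ (Fin d), ∫ x, |pstar (x + h) - pstar x| ≤ Λ * ‖h‖ ^ α) →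
        (∀ x, 0 ≤ K x) → Integrable K → (∫ x, K x = 1) →
        (∫ y, K y • y = (0 : EuclideanSpace ℝ (Fin d))) →
        Integrable (fun y => ‖y‖ ^ (1 + α) * K y) →
        (∫ y, ‖y‖ ^ (1 + α) * K y = m) →
        ∀ σ : ℝ, 0 < σ →
        ∀ f : EuclideanSpace ℝ (Fin d) → ℝ, LipschitzWith 1 f →
          ∫ z, f z * (pstar z - ∫ y, (σ ^ d)⁻¹ * K (σ⁻¹ • (z - y)) * pstar y) ≤
            C * σ ^ (1 + α) := by
  have hc : 0 < Λ / (2 * (2 ^ α - 1)) := by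
    have := Real.one_lt_rpow (by norm_num : (1 : ℝ) < 2) hα.1
    exact div_pos hΛ (by linarith)
  refine ⟨Λ / (2 * (2 ^ α - 1)) * m + 1, by positivity, ?_⟩
  intro pstar K _ hp _ hpH hK0 hK hK1 hKmean hKm hKmval σ hσ f hf
  have hdilate (x : EuclideanSpace ℝ (Fin d)) : (σ ^ d)⁻¹ * K (σ⁻¹ • x) = dilate σ K x := by
    rw [dilate, finrank_euclideanSpace_fin]
  simp only [hdilate]
  calc _ ≤ Λ / (2 * (2 ^ α - 1)) * ∫ w, ‖w‖ ^ (1 + α) * dilate σ K w :=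
        integral_lipschitz_mul_sub_conv_le hΛ.le hα.1 hp hpH (dilate_nonneg hK0 hσ.le)
          (integrable_dilate hK hσ.ne') (by rw [integral_dilate hσ, hK1])
          (by rw [integral_dilate_smul_self hσ, hKmean, smul_zero])
          (integrable_rpow_mul_dilate hKm hσ) hf
    _ = Λ / (2 * (2 ^ α - 1)) * m * σ ^ (1 + α) := by
        rw [integral_rpow_mul_dilate hσ, hKmval]; ring
    _ ≤ (Λ / (2 * (2 ^ α - 1)) * m + 1) * σ ^ (1 + α) := by
        gcongr; linarith

/-- **Bias bound for kernel smoothing in Wasserstein-1 distance.**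
Let `α ∈ (0,1]`, `Λ > 0`, `m ≥ 0`. There is a constant `C > 0` depending only on `d`, `Λ`
and `m` such that: for every probability density `p*` on `ℝ^d` with
`∫|p*(x+h) − p*(x)| dx ≤ Λ|h|^α` for all `h`, every nonnegative probability density kernel `K`
with `∫ y K(y) dy = 0` and `∫ |y|^{1+α} K(y) dy = m`, every bandwidth `σ > 0`, and every
1-Lipschitz `f : ℝ^d → ℝ`, one has
`∫ f(z)(p*(z) − (K_σ ∗ p*)(z)) dz ≤ C σ^{1+α}`, where `K_σ(x) = σ^{-d}K(x/σ)`. -/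
theorem kernel_smoothing_bias_bound (d : ℕ) (hd : 1 ≤ d)
    (α Λ m : ℝ) (hα : α ∈ Set.Ioc (0:ℝ) 1) (hΛ : 0 < Λ) (hm : 0 ≤ m) :
    ∃ C : ℝ, 0 < C ∧
      ∀ (pstar K : EuclideanSpace ℝ (Fin d) → ℝ),
        (∀ x, 0 ≤ pstar x) → Integrable pstar → (∫ x, pstar x = 1) →
        (∀ h : EuclideanSpace ℝ (Fin d), ∫ x, |pstar (x + h) - pstar x| ≤ Λ * ‖h‖ ^ α) →
        (∀ x, 0 ≤ K x) → Integrable K → (∫ x, K x = 1) →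
        (∫ y, K y • y = (0 : EuclideanSpace ℝ (Fin d))) →
        Integrable (fun y => ‖y‖ ^ (1 + α) * K y) →
        (∫ y, ‖y‖ ^ (1 + α) * K y = m) →
        ∀ σ : ℝ, 0 < σ →
        ∀ f : EuclideanSpace ℝ (Fin d) → ℝ, LipschitzWith 1 f →
          ∫ z, f z * (pstar z - ∫ y, (σ ^ d)⁻¹ * K (σ⁻¹ • (z - y)) * pstar y) ≤
            C * σ ^ (1 + α) :=
  kernel_smoothing_bias_bound_general d α Λ m hα hΛ hm
end

section
/- Let M ⊂ ℝ^d be a closed set with reach at least τ > 0, i.e., every point x ∈ ℝ^d with dist(x, M) < τ has a unique nearest point in M, and let π denote the nearest-point projection onto M. Then for every 0 < r < τ, π restricted to the tube B(r, M) = {x ∈ ℝ^d : dist(x, M) ≤ r} is Lipschitz with Lipschitz constant 1/(1 − r/τ): for all x, y ∈ B(r, M), |π(x) − π(y)| ≤ (1/(1 − r/τ)) |x − y|. -/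
/-!
Write `a = π x` and `t = dist(x, M) > 0`. For every `m < τ` the point `a + (m / t) • (x - a)` on
the normal ray still has distance `m` from `M`, so the open ball of radius `m` around it misses
`M`; expanding this for `e ∈ M` and letting `m → τ` gives `2τ ⟪x - a, e - a⟫ ≤ t ‖e - a‖²`.
Adding this inequality at `x` (with `e = π y`) and at `y` (with `e = π x`) and applying
Cauchy–Schwarz gives `(τ - r) ‖π x - π y‖ ≤ τ ‖x - y‖`.

Uniqueness of nearest points enters through the normal-ray fact. It makes `π` continuous on the
tube, so moving from a point `z` in the direction `z - π z` increases the distance to `M` at rate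
arbitrarily close to `1`. Maximizing the distance to `M` over a compact set of points reachable
at rate `1 / (1 + ε)` then yields a point at distance `m` from `M` within `(1 + ε)(m - t)` of `x`;
letting `ε → 0` and using strict convexity puts it on the ray.
-/

open Metric Filter Topology
open scoped RealInnerProductSpace

theorem isOpen_setOf_infDist_lt {X : Type*} [PseudoMetricSpace X] (M : Set X) (τ : ℝ) :
    IsOpen {x | infDist x M < τ} :=
  isOpen_lt (continuous_infDist_pt M) continuous_const

structure IsNearestPointProj {X : Type*} [PseudoMetricSpace X] (M : Set X) (τ : ℝ) (π : X → X) :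
    Prop where
  mem : ∀ x, infDist x M < τ → π x ∈ M
  dist_eq : ∀ x, infDist x M < τ → dist x (π x) = infDist x M
  eq_of_dist_eq : ∀ x, infDist x M < τ → ∀ z ∈ M, dist x z = infDist x M → z = π x

namespace IsNearestPointProj

variable {X : Type*} [PseudoMetricSpace X] {M : Set X} {τ : ℝ} {π : X → X}

theorem of_existsUnique
    (hreach : ∀ x, infDist x M < τ → ∃! z, z ∈ M ∧ dist x z = infDist x M)
    (hπ : ∀ x, infDist x M < τ → π x ∈ M ∧ dist x (π x) = infDist x M) :
    IsNearestPointProj M τ π where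
  mem x hx := (hπ x hx).1
  dist_eq x hx := (hπ x hx).2
  eq_of_dist_eq x hx _ hz hxz := (hreach x hx).unique ⟨hz, hxz⟩ (hπ x hx)

theorem eventually_mem_inter_closedBall (hπ : IsNearestPointProj M τ π) {x : X}
    (hx : infDist x M < τ) {δ : ℝ} (hδ : 0 < δ) :
    ∀ᶠ y in 𝓝 x, π y ∈ M ∩ closedBall x (infDist x M + δ) := by
  filter_upwards [(isOpen_setOf_infDist_lt M τ).mem_nhds hx, ball_mem_nhds x (half_pos hδ)]
    with y hy hyx
  refine ⟨hπ.mem y hy, ?_⟩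
  rw [mem_closedBall, dist_comm]
  have hyx' : dist y x < δ / 2 := hyx
  linarith [dist_triangle x y (π y), hπ.dist_eq y hy, infDist_le_infDist_add_dist (x := y) (y := x)
    (s := M), dist_comm x y]

theorem continuousAt [ProperSpace X] (hM : IsClosed M) (hπ : IsNearestPointProj M τ π) {x : X}
    (hx : infDist x M < τ) : ContinuousAt π x := by
  have hclosed : ∀ δ, IsClosed (M ∩ closedBall x (infDist x M + δ)) :=
    fun δ => hM.inter isClosed_closedBall
  refine ((isCompact_closedBall x _).inter_left hM).tendsto_nhds_of_unique_mapClusterPt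
    (hπ.eventually_mem_inter_closedBall hx one_pos) fun c _ hc => ?_
  have hcδ : ∀ δ, 0 < δ → c ∈ M ∩ closedBall x (infDist x M + δ) := fun δ hδ =>
    (hclosed δ).mem_of_mapClusterPt hc (hπ.eventually_mem_inter_closedBall hx hδ)
  have hcM : c ∈ M := (hcδ 1 one_pos).1
  refine hπ.eq_of_dist_eq x hx c hcM (le_antisymm ?_ (infDist_le_dist_of_mem hcM))
  refine le_of_forall_pos_le_add fun δ hδ => ?_
  rw [dist_comm]
  exact (hcδ δ hδ).2

end IsNearestPointProj

variable {E : Type*} [NormedAddCommGroup E] [InnerProductSpace ℝ E]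

theorem sq_add_two_mul_le_norm_sq {z p q : E} {ρ η s : ℝ} (hρ : 0 < ρ) (hzp : ‖z - p‖ = ρ)
    (hzq : ρ ≤ ‖z - q‖) (hpq : ‖p - q‖ ≤ η) (hs : 0 ≤ s) :
    ρ ^ 2 + 2 * s * (ρ - η) ≤ ‖z + (s / ρ) • (z - p) - q‖ ^ 2 := by
  have hinner : ρ ^ 2 - η * ρ ≤ ⟪z - q, z - p⟫ := by
    have hsplit : z - q = (z - p) + (p - q) := by abel
    have hcs := neg_le_of_abs_le (abs_real_inner_le_norm (p - q) (z - p))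
    rw [hzp] at hcs
    rw [hsplit, inner_add_left, real_inner_self_eq_norm_sq, hzp]
    nlinarith [mul_le_mul_of_nonneg_right hpq hρ.le]
  have hexpand : ‖z + (s / ρ) • (z - p) - q‖ ^ 2
      = ‖z - q‖ ^ 2 + 2 * (s / ρ) * ⟪z - q, z - p⟫ + (s / ρ) ^ 2 * ρ ^ 2 := by
    rw [show z + (s / ρ) • (z - p) - q = (z - q) + (s / ρ) • (z - p) by abel, norm_add_sq_real,
      real_inner_smul_right, norm_smul, hzp, Real.norm_eq_abs, abs_of_nonneg (by positivity)]
    ring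
  have hq : ρ ^ 2 ≤ ‖z - q‖ ^ 2 := pow_le_pow_left₀ hρ.le hzq 2
  have hlin : 2 * s * (ρ - η) ≤ 2 * (s / ρ) * ⟪z - q, z - p⟫ := by
    have := mul_le_mul_of_nonneg_left hinner (by positivity : 0 ≤ 2 * (s / ρ))
    calc 2 * s * (ρ - η) = 2 * (s / ρ) * (ρ ^ 2 - η * ρ) := by field_simp
      _ ≤ _ := this
  rw [hexpand]
  nlinarith [sq_nonneg (s / ρ), sq_nonneg ρ]

theorem two_mul_mul_inner_le_of_infDist_eq {M : Set E} {x a W e : E} {t m : ℝ} (ht : 0 < t)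
    (hxa : dist x a = t) (ha : a ∈ M) (hW : infDist W M = m) (hWx : dist W x ≤ m - t)
    (he : e ∈ M) : 2 * m * ⟪x - a, e - a⟫ ≤ t * ‖e - a‖ ^ 2 := by
  have hWa : dist a W = m := by
    refine le_antisymm ?_ (by rw [← hW, dist_comm]; exact infDist_le_dist_of_mem ha)
    linarith [dist_triangle W x a, dist_comm W a]
  have hm : 0 < m := by linarith [dist_nonneg (x := W) (y := x)]
  have hxW : dist x W = (1 - t / m) * dist a W := by
    rw [hWa, sub_mul, div_mul_cancel₀ _ hm.ne', one_mul, dist_comm]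
    exact le_antisymm hWx (by linarith [dist_triangle a x W, dist_comm a x, dist_comm x W])
  have hline : x = AffineMap.lineMap a W (t / m) :=
    eq_lineMap_of_dist_eq_mul_of_dist_eq_mul
      (by rw [hWa, div_mul_cancel₀ _ hm.ne', dist_comm, hxa]) hxW
  have hxa' : x - a = (t / m) • (W - a) := by
    rw [hline, AffineMap.lineMap_apply, vsub_eq_sub, vadd_eq_add, add_sub_cancel_right]
  have hball : 2 * ⟪W - a, e - a⟫ ≤ ‖e - a‖ ^ 2 := by
    have hWe : m ≤ ‖W - e‖ := by rw [← dist_eq_norm, ← hW]; exact infDist_le_dist_of_mem he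
    have hsplit : ‖W - e‖ ^ 2 = ‖W - a‖ ^ 2 - 2 * ⟪W - a, e - a⟫ + ‖e - a‖ ^ 2 := by
      rw [show W - e = (W - a) - (e - a) by abel, norm_sub_sq_real]
    rw [← dist_eq_norm W a, dist_comm, hWa] at hsplit
    nlinarith
  rw [hxa', real_inner_smul_left]
  calc 2 * m * (t / m * ⟪W - a, e - a⟫) = t * (2 * ⟪W - a, e - a⟫) := by field_simp
    _ ≤ t * ‖e - a‖ ^ 2 := mul_le_mul_of_nonneg_left hball ht.le

namespace IsNearestPointProj

variable [ProperSpace E] {M : Set E} {τ : ℝ} {π : E → E}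

theorem exists_infDist_gt (hM : IsClosed M) (hπ : IsNearestPointProj M τ π) {z : E} {m ε : ℝ}
    (hz : 0 < infDist z M) (hzτ : infDist z M < τ) (hzm : infDist z M < m) (hε : 0 < ε) :
    ∃ W, infDist z M < infDist W M ∧ infDist W M ≤ m ∧
      dist W z ≤ (1 + ε) * (infDist W M - infDist z M) := by
  set ρ := infDist z M
  -- For `s ≤ ε ρ` this `η` makes the gain `2 s (ρ - η)` in `infDist²` at least
  -- `(2ρ + s) s / (1 + ε)`, i.e. the distance to `M` grows at rate at least `1 / (1 + ε)`.
  set η := ε * ρ / (2 * (1 + ε))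
  have hη : 2 * (1 + ε) * (ρ - η) = (2 + ε) * ρ := by simp only [η]; field_simp; ring
  have hηρ : η < ρ := by nlinarith
  have hev : ∀ᶠ y in 𝓝 z, infDist y M < τ ∧ π y ∈ ball (π z) η :=
    ((isOpen_setOf_infDist_lt M τ).eventually_mem hzτ).and
      ((hπ.continuousAt hM hzτ).eventually (ball_mem_nhds _ (by positivity)))
  obtain ⟨δ, hδ, hnear⟩ := Metric.eventually_nhds_iff.1 hev
  set s := min (δ / 2) (min (ε * ρ) (m - ρ))
  have hs : 0 < s := lt_min (half_pos hδ) (lt_min (by positivity) (by linarith))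
  set W := z + (s / ρ) • (z - π z)
  have hzπ : ‖z - π z‖ = ρ := by rw [← dist_eq_norm, hπ.dist_eq z hzτ]
  have hWz : dist W z = s := by
    rw [dist_eq_norm, add_sub_cancel_left, norm_smul, hzπ, Real.norm_eq_abs,
      abs_of_pos (by positivity), div_mul_cancel₀ _ hz.ne']
  obtain ⟨hWτ, hWπ⟩ := hnear (by rw [hWz]; linarith [min_le_left (δ / 2) (min (ε * ρ) (m - ρ))])
  have hlow : ρ ^ 2 + 2 * s * (ρ - η) ≤ infDist W M ^ 2 := by
    rw [← hπ.dist_eq W hWτ, dist_eq_norm]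
    refine sq_add_two_mul_le_norm_sq hz hzπ ?_ ?_ hs.le
    · rw [← dist_eq_norm]; exact infDist_le_dist_of_mem (hπ.mem W hWτ)
    · rw [← dist_eq_norm, dist_comm]; exact (mem_ball.1 hWπ).le
  have hup : infDist W M ≤ ρ + s := by
    rw [← hWz]; exact infDist_le_infDist_add_dist
  have hsε : s ≤ ε * ρ := (min_le_right _ _).trans (min_le_left _ _)
  have hsm : s ≤ m - ρ := (min_le_right _ _).trans (min_le_right _ _)
  have hgt : ρ < infDist W M :=
    lt_of_pow_lt_pow_left₀ 2 infDist_nonneg (by nlinarith [mul_pos hs (sub_pos.2 hηρ)])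
  refine ⟨W, hgt, by linarith, ?_⟩
  rw [hWz]
  nlinarith [mul_le_mul_of_nonneg_left hsε hs.le]

theorem exists_infDist_eq_dist_le_one_add_mul (hM : IsClosed M) (hπ : IsNearestPointProj M τ π)
    {x : E} {m ε : ℝ} (hx : 0 < infDist x M) (hxm : infDist x M ≤ m) (hmτ : m < τ) (hε : 0 < ε) :
    ∃ W, infDist W M = m ∧ dist W x ≤ (1 + ε) * (m - infDist x M) := by
  set t := infDist x M
  set K := {W | infDist W M ≤ m ∧ dist W x ≤ (1 + ε) * (infDist W M - t)}
  have hKclosed : IsClosed K :=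
    (isClosed_le (continuous_infDist_pt M) continuous_const).inter
      (isClosed_le (continuous_id.dist continuous_const)
        (continuous_const.mul ((continuous_infDist_pt M).sub continuous_const)))
  have hKball : K ⊆ closedBall x ((1 + ε) * (m - t)) := fun W hW =>
    hW.2.trans (mul_le_mul_of_nonneg_left (by linarith [hW.1]) (by positivity))
  have hxK : x ∈ K := ⟨hxm, show dist x x ≤ (1 + ε) * (t - t) by simp⟩
  have hK : IsCompact K := (isCompact_closedBall x _).of_isClosed_subset hKclosed hKball
  obtain ⟨W, hWK, hWmax⟩ := hK.exists_isMaxOn ⟨x, hxK⟩ (continuous_infDist_pt M).continuousOn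
  have htW : t ≤ infDist W M := by nlinarith [hWK.2, dist_nonneg (x := W) (y := x)]
  have hWm : infDist W M = m := by
    refine le_antisymm hWK.1 (not_lt.1 fun hlt => ?_)
    obtain ⟨W', hgt, hW'm, hW'W⟩ :=
      hπ.exists_infDist_gt hM (hx.trans_le htW) (hlt.trans hmτ) hlt hε
    have hW'K : W' ∈ K := ⟨hW'm, by linarith [dist_triangle W' W x, hWK.2]⟩
    exact (hWmax hW'K).not_gt hgt
  exact ⟨W, hWm, hWm ▸ hWK.2⟩

theorem exists_infDist_eq_dist_le (hM : IsClosed M) (hπ : IsNearestPointProj M τ π)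
    {x : E} {m : ℝ} (hx : 0 < infDist x M) (hxm : infDist x M ≤ m) (hmτ : m < τ) :
    ∃ W, infDist W M = m ∧ dist W x ≤ m - infDist x M := by
  set t := infDist x M
  set K := {W | infDist W M = m} ∩ closedBall x (2 * (m - t))
  have hK : IsCompact K := (isCompact_closedBall x _).inter_left
    (isClosed_eq (continuous_infDist_pt M) continuous_const)
  obtain ⟨W₁, hW₁, hW₁x⟩ := hπ.exists_infDist_eq_dist_le_one_add_mul hM hx hxm hmτ one_pos
  obtain ⟨W, hWK, hWmin⟩ := hK.exists_isMinOn (f := (dist · x))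
    ⟨W₁, hW₁, by rw [mem_closedBall]; linarith⟩ (continuous_id.dist continuous_const).continuousOn
  have hlim : Tendsto (fun ε => (1 + ε) * (m - t)) (𝓝[>] 0) (𝓝 (m - t)) :=
    tendsto_nhdsWithin_of_tendsto_nhds (by simpa using (by fun_prop :
      Continuous fun ε : ℝ => (1 + ε) * (m - t)).tendsto 0)
  refine ⟨W, hWK.1, ge_of_tendsto hlim ?_⟩
  filter_upwards [Ioo_mem_nhdsGT one_pos] with ε hε
  obtain ⟨Wε, hWε, hWεx⟩ := hπ.exists_infDist_eq_dist_le_one_add_mul hM hx hxm hmτ hε.1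
  have hWεK : Wε ∈ K := ⟨hWε, by rw [mem_closedBall]; nlinarith [hε.2]⟩
  exact (hWmin hWεK).trans hWεx

theorem two_mul_mul_inner_le (hM : IsClosed M) (hπ : IsNearestPointProj M τ π) {x e : E}
    (hx : infDist x M < τ) (he : e ∈ M) :
    2 * τ * ⟪x - π x, e - π x⟫ ≤ infDist x M * ‖e - π x‖ ^ 2 := by
  rcases (infDist_nonneg : 0 ≤ infDist x M).eq_or_lt with h0 | h0
  · have hπx : π x = x := (dist_eq_zero.1 ((hπ.dist_eq x hx).trans h0.symm)).symm
    rw [hπx, sub_self, inner_zero_left, mul_zero, ← h0, zero_mul]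
  have hlim : Tendsto (fun m => 2 * m * ⟪x - π x, e - π x⟫) (𝓝[<] τ)
      (𝓝 (2 * τ * ⟪x - π x, e - π x⟫)) :=
    tendsto_nhdsWithin_of_tendsto_nhds ((by fun_prop : Continuous fun m : ℝ =>
      2 * m * ⟪x - π x, e - π x⟫).tendsto τ)
  refine le_of_tendsto hlim ?_
  filter_upwards [Ioo_mem_nhdsLT hx] with m hm
  obtain ⟨W, hW, hWx⟩ := hπ.exists_infDist_eq_dist_le hM h0 hm.1.le hm.2
  exact two_mul_mul_inner_le_of_infDist_eq h0 (hπ.dist_eq x hx) (hπ.mem x hx) hW hWx he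

end IsNearestPointProj

theorem mul_dist_le_of_two_mul_inner_le {x y a b : E} {r τ : ℝ} (hτ : 0 ≤ τ)
    (hx : 2 * τ * ⟪x - a, b - a⟫ ≤ r * ‖b - a‖ ^ 2)
    (hy : 2 * τ * ⟪y - b, a - b⟫ ≤ r * ‖a - b‖ ^ 2) :
    (τ - r) * dist a b ≤ τ * dist x y := by
  rw [dist_comm a b, dist_eq_norm, dist_eq_norm]
  have hsum : ⟪x - a, b - a⟫ + ⟪y - b, a - b⟫ = ‖b - a‖ ^ 2 + ⟪x - y, b - a⟫ := by
    rw [show x - a = (b - a) + (x - y) + (y - b) by abel, show a - b = -(b - a) by abel,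
      inner_add_left, inner_add_left, inner_neg_right, real_inner_self_eq_norm_sq]
    ring
  have hcs : -(‖x - y‖ * ‖b - a‖) ≤ ⟪x - y, b - a⟫ := neg_le_of_abs_le (abs_real_inner_le_norm _ _)
  rw [norm_sub_rev a b] at hy
  rcases (norm_nonneg (b - a)).eq_or_lt with h0 | h0
  · rw [← h0, mul_zero]; positivity
  refine le_of_mul_le_mul_right ?_ h0
  nlinarith [mul_le_mul_of_nonneg_left hcs hτ]

theorem reach_projection_lipschitz_general (d : ℕ)
    (M : Set (EuclideanSpace ℝ (Fin d))) (hMclosed : IsClosed M)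
    (τ : ℝ) (hτ : 0 < τ)
    (hreach : ∀ x : EuclideanSpace ℝ (Fin d), infDist x M < τ →
      ∃! z : EuclideanSpace ℝ (Fin d), z ∈ M ∧ dist x z = infDist x M)
    (π : EuclideanSpace ℝ (Fin d) → EuclideanSpace ℝ (Fin d))
    (hπ : ∀ x : EuclideanSpace ℝ (Fin d), infDist x M < τ →
      π x ∈ M ∧ dist x (π x) = infDist x M)
    (r : ℝ) (hrτ : r < τ) :
    ∀ x y : EuclideanSpace ℝ (Fin d), infDist x M ≤ r → infDist y M ≤ r →
      dist (π x) (π y) ≤ (1 / (1 - r / τ)) * dist x y := by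
  intro x y hxr hyr
  have hproj := IsNearestPointProj.of_existsUnique hreach hπ
  have hxτ := hxr.trans_lt hrτ
  have hyτ := hyr.trans_lt hrτ
  have hx := (hproj.two_mul_mul_inner_le hMclosed hxτ (hproj.mem y hyτ)).trans
    (mul_le_mul_of_nonneg_right hxr (sq_nonneg _))
  have hy := (hproj.two_mul_mul_inner_le hMclosed hyτ (hproj.mem x hxτ)).trans
    (mul_le_mul_of_nonneg_right hyr (sq_nonneg _))
  have hlip := mul_dist_le_of_two_mul_inner_le hτ.le hx hy
  rw [show 1 / (1 - r / τ) = τ / (τ - r) by field_simp, div_mul_eq_mul_div,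
    le_div_iff₀ (sub_pos.2 hrτ)]
  linarith

/-- **Lipschitz continuity of the nearest-point projection onto a set of positive reach.**
Let `M ⊂ ℝ^d` be a closed set with reach at least `τ > 0`, i.e., every point within distance
`τ` of `M` has a unique nearest point in `M`, and let `π` be the nearest-point projection.
Then for every `0 < r < τ`, the restriction of `π` to the tube
`B(r, M) = {x : dist(x, M) ≤ r}` is Lipschitz with constant `1/(1 − r/τ)`. -/
theorem reach_projection_lipschitz (d : ℕ)
    (M : Set (EuclideanSpace ℝ (Fin d))) (hMclosed : IsClosed M) (hMne : M.Nonempty)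
    (τ : ℝ) (hτ : 0 < τ)
    (hreach : ∀ x : EuclideanSpace ℝ (Fin d), infDist x M < τ →
      ∃! z : EuclideanSpace ℝ (Fin d), z ∈ M ∧ dist x z = infDist x M)
    (π : EuclideanSpace ℝ (Fin d) → EuclideanSpace ℝ (Fin d))
    (hπ : ∀ x : EuclideanSpace ℝ (Fin d), infDist x M < τ →
      π x ∈ M ∧ dist x (π x) = infDist x M)
    (r : ℝ) (hr0 : 0 < r) (hrτ : r < τ) :
    ∀ x y : EuclideanSpace ℝ (Fin d), infDist x M ≤ r → infDist y M ≤ r →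
      dist (π x) (π y) ≤ (1 / (1 - r / τ)) * dist x y :=
  reach_projection_lipschitz_general d M hMclosed τ hτ hreach π hπ r hrτ
end

section
/- Let d' ≤ d, let A : ℝ^{d'} → ℝ^{d'×d} (linear maps from ℝ^d to ℝ^{d'}) be continuously differentiable with sup_y ‖A(y)‖ ≤ c_1 < 1 and sup_y ‖DA(y)‖ ≤ c_0, and let r > 0 with c_0 r < 1. Then for every u ∈ ℝ^d with |u| ≤ r, the map F_u : ℝ^{d'} → ℝ^{d'}, F_u(y) = y + A(y)u, is a C¹ diffeomorphism of ℝ^{d'}; its inverse S_u satisfies S_u(z) = z − A(S_u(z))u for all z, its derivative satisfies sup_z ‖DS_u(z)‖ ≤ 1/(1 − c_0 r), and there is a constant c depending only on d', c_0 and r such that sup_z | |det(DS_u(z))| − 1 | ≤ c |u|. -/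
/-!
Write `F_u = id + g` with `g y = A(y) u`. By the mean value inequality `g` is Lipschitz with
constant `c₀|u| ≤ c₀ r < 1`, so `F_u` approximates the identity on the whole space and is
therefore a homeomorphism; each `DF_u(y) = 1 + Dg(y)` is invertible by the Neumann series, so
the inverse `S_u` is C¹. Differentiating `S_u ∘ F_u = id` gives `DS_u(z) (1 + B) = 1` with
`‖B‖ ≤ c₀|u|`, whence `‖DS_u(z)‖ ≤ (1 - c₀ r)⁻¹` and `‖DS_u(z) - 1‖ ≤ (1 - c₀ r)⁻¹ c₀ |u|`.
Finally `det` is C¹, hence Lipschitz on the ball of operators of norm `≤ (1 - c₀ r)⁻¹`, which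
turns the last estimate into `| |det DS_u(z)| - 1 | ≤ c |u|`.
-/

open Set Function
open scoped NNReal

theorem norm_le_inv_one_sub_of_mul_one_add_eq_one {R : Type*} [NormedRing R]
    (h1 : ‖(1 : R)‖ ≤ 1) {V B : R} (hV : V * (1 + B) = 1) (hB : ‖B‖ < 1) :
    ‖V‖ ≤ (1 - ‖B‖)⁻¹ := by
  have hV' : V = 1 - V * B := by rw [← hV]; noncomm_ring
  have : ‖V‖ ≤ 1 + ‖V‖ * ‖B‖ :=
    calc ‖V‖ = ‖1 - V * B‖ := by rw [← hV']
      _ ≤ ‖(1 : R)‖ + ‖V * B‖ := norm_sub_le _ _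
      _ ≤ 1 + ‖V‖ * ‖B‖ := add_le_add h1 (norm_mul_le V B)
  rw [← one_div, le_div_iff₀ (by linarith)]
  linarith

theorem norm_sub_one_le_of_mul_one_add_eq_one {R : Type*} [NormedRing R] {V B : R}
    (hV : V * (1 + B) = 1) : ‖V - 1‖ ≤ ‖V‖ * ‖B‖ := by
  have : V - 1 = -(V * B) := by rw [← hV]; noncomm_ring
  rw [this, norm_neg]
  exact norm_mul_le V B

theorem ContinuousLinearMap.exists_equiv_one_add {𝕜 E : Type*} [NontriviallyNormedField 𝕜]
    [NormedAddCommGroup E] [NormedSpace 𝕜 E] [CompleteSpace E] {B : E →L[𝕜] E} (hB : ‖B‖ < 1) :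
    ∃ e : E ≃L[𝕜] E, (e : E →L[𝕜] E) = 1 + B :=
  ⟨ContinuousLinearEquiv.unitsEquiv 𝕜 E (Units.oneSub (-B) (by rwa [norm_neg])), by
    ext x; simp⟩

section PerturbationOfIdentity

variable {𝕜 E : Type*} [RCLike 𝕜] [NormedAddCommGroup E] [NormedSpace 𝕜 E] {g : E → E}

theorem LipschitzWith.approximatesLinearOn_id_add {k : ℝ≥0} (hg : LipschitzWith k g) :
    ApproximatesLinearOn (fun x => x + g x) (ContinuousLinearEquiv.refl 𝕜 E : E →L[𝕜] E) univ
      k := by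
  intro x _ y _
  simpa [add_sub_add_comm, dist_eq_norm] using hg.dist_le_mul x y

variable {k : ℝ}

theorem fderiv_mul_one_add_fderiv_eq_one {S : E → E} (hS : LeftInverse S (fun x => x + g x))
    (hS' : RightInverse S (fun x => x + g x)) {z : E} (hSd : DifferentiableAt 𝕜 S z)
    (hgd : DifferentiableAt 𝕜 g (S z)) : fderiv 𝕜 S z * (1 + fderiv 𝕜 g (S z)) = 1 := by
  have hF : HasFDerivAt (fun x => x + g x) (1 + fderiv 𝕜 g (S z)) (S z) := by
    rw [ContinuousLinearMap.one_def]; exact (hasFDerivAt_id _).add hgd.hasFDerivAt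
  have hSd' : HasFDerivAt S (fderiv 𝕜 S z) (S z + g (S z)) := by
    rw [show S z + g (S z) = z from hS' z]; exact hSd.hasFDerivAt
  have hSF : HasFDerivAt (S ∘ fun x => x + g x) (fderiv 𝕜 S z * (1 + fderiv 𝕜 g (S z))) (S z) :=
    hSd'.comp (S z) hF
  rw [show (S ∘ fun x => x + g x) = id from funext hS] at hSF
  exact hSF.unique (hasFDerivAt_id _)

theorem norm_fderiv_le_of_inverse_id_add (hg : Differentiable 𝕜 g)
    (hg' : ∀ x, ‖fderiv 𝕜 g x‖ ≤ k) (hk : k < 1) {S : E → E}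
    (hS : LeftInverse S (fun x => x + g x)) (hS' : RightInverse S (fun x => x + g x)) {z : E}
    (hSd : DifferentiableAt 𝕜 S z) : ‖fderiv 𝕜 S z‖ ≤ (1 - k)⁻¹ :=
  (norm_le_inv_one_sub_of_mul_one_add_eq_one ContinuousLinearMap.norm_id_le
    (fderiv_mul_one_add_fderiv_eq_one hS hS' hSd (hg _)) ((hg' _).trans_lt hk)).trans
    (inv_anti₀ (by linarith) (by linarith [hg' (S z)]))

theorem norm_fderiv_sub_one_le_of_inverse_id_add (hg : Differentiable 𝕜 g)
    (hg' : ∀ x, ‖fderiv 𝕜 g x‖ ≤ k) (hk : k < 1) {S : E → E}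
    (hS : LeftInverse S (fun x => x + g x)) (hS' : RightInverse S (fun x => x + g x)) {z : E}
    (hSd : DifferentiableAt 𝕜 S z) : ‖fderiv 𝕜 S z - 1‖ ≤ (1 - k)⁻¹ * ‖fderiv 𝕜 g (S z)‖ :=
  (norm_sub_one_le_of_mul_one_add_eq_one
    (fderiv_mul_one_add_fderiv_eq_one hS hS' hSd (hg _))).trans
    (mul_le_mul_of_nonneg_right (norm_fderiv_le_of_inverse_id_add hg hg' hk hS hS' hSd)
      (norm_nonneg _))

variable [CompleteSpace E]

theorem ContDiff.exists_contDiff_inverse_id_add {n : WithTop ℕ∞} (hg : ContDiff 𝕜 n g)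
    (hn : n ≠ 0) (hg' : ∀ x, ‖fderiv 𝕜 g x‖ ≤ k) (hk : k < 1) :
    ∃ S : E → E, ContDiff 𝕜 n S ∧ LeftInverse S (fun x => x + g x) ∧
      RightInverse S (fun x => x + g x) := by
  have hgd := hg.differentiable hn
  have hlip : LipschitzWith k.toNNReal g :=
    lipschitzWith_of_nnnorm_fderiv_le hgd fun x => by
      simpa using Real.toNNReal_le_toNNReal (hg' x)
  have hc : Subsingleton E ∨
      k.toNNReal < ‖((ContinuousLinearEquiv.refl 𝕜 E).symm : E →L[𝕜] E)‖₊⁻¹ := by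
    rcases subsingleton_or_nontrivial E with hE | hE
    · exact .inl hE
    · right; simpa using hk
  let Φ := (hlip.approximatesLinearOn_id_add (𝕜 := 𝕜)).toHomeomorph _ hc
  have hΦ : ⇑Φ = fun x => x + g x := rfl
  choose e he using fun x => ContinuousLinearMap.exists_equiv_one_add ((hg' x).trans_lt hk)
  have hΦd : ∀ x, HasFDerivAt Φ (e x : E →L[𝕜] E) x := fun x => by
    rw [hΦ, he, ContinuousLinearMap.one_def]
    exact (hasFDerivAt_id x).add (hgd x).hasFDerivAt
  refine ⟨Φ.symm, Φ.contDiff_symm hΦd ?_, ?_, ?_⟩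
  · rw [hΦ]; exact contDiff_id.add hg
  · rw [← hΦ]; exact Φ.symm_apply_apply
  · rw [← hΦ]; exact Φ.apply_symm_apply

end PerturbationOfIdentity

theorem ContinuousLinearMap.contDiff_det {𝕜 E : Type*} [NontriviallyNormedField 𝕜]
    [CompleteSpace 𝕜] [NormedAddCommGroup E] [NormedSpace 𝕜 E] [FiniteDimensional 𝕜 E]
    {n : WithTop ℕ∞} : ContDiff 𝕜 n fun T : E →L[𝕜] E => T.det := by
  classical
  let b := Module.finBasis 𝕜 E
  let entry (i j : Fin (Module.finrank 𝕜 E)) : (E →L[𝕜] E) →ₗ[𝕜] 𝕜 :=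
    (LinearMap.proj j ∘ₗ LinearMap.proj i) ∘ₗ (LinearMap.toMatrix b b).toLinearMap ∘ₗ
      ContinuousLinearMap.coeLM 𝕜
  have hdet : (fun T : E →L[𝕜] E => T.det) =
      fun T => ∑ σ : Equiv.Perm _, Equiv.Perm.sign σ • ∏ i, entry (σ i) i T := by
    funext T
    rw [ContinuousLinearMap.det, ← LinearMap.det_toMatrix b, Matrix.det_apply]
    rfl
  rw [hdet]
  refine ContDiff.sum fun σ _ => (contDiff_prod fun i _ => ?_).const_smul _
  exact (entry (σ i) i).toContinuousLinearMap.contDiff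

theorem ContinuousLinearMap.exists_abs_abs_det_sub_one_le {E : Type*} [NormedAddCommGroup E]
    [NormedSpace ℝ E] [FiniteDimensional ℝ E] (R : ℝ) :
    ∃ L, 0 ≤ L ∧ ∀ T : E →L[ℝ] E, ‖T‖ ≤ R → |(|T.det| - 1)| ≤ L * ‖T - 1‖ := by
  obtain ⟨L, hL⟩ := (contDiff_det (n := 1)).locallyLipschitz.locallyLipschitzOn
    |>.exists_lipschitzOnWith_of_compact (isCompact_closedBall (0 : E →L[ℝ] E) (max R 1))
  refine ⟨L, L.2, fun T hT => ?_⟩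
  have h1 : ‖(1 : E →L[ℝ] E)‖ ≤ max R 1 := norm_id_le.trans (le_max_right _ _)
  have hdet1 : (1 : E →L[ℝ] E).det = 1 := LinearMap.det_id
  calc |(|T.det| - 1)| ≤ |T.det - (1 : E →L[ℝ] E).det| := by
        simpa [hdet1] using abs_abs_sub_abs_le_abs_sub T.det 1
    _ ≤ L * ‖T - 1‖ := by
      simpa [← dist_eq_norm, Real.dist_eq] using hL.dist_le_mul T
        (mem_closedBall_zero_iff.2 (hT.trans (le_max_left _ _))) 1 (mem_closedBall_zero_iff.2 h1)

theorem norm_fderiv_apply_const_le {𝕜 E F G : Type*} [NontriviallyNormedField 𝕜]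
    [NormedAddCommGroup E] [NormedSpace 𝕜 E] [NormedAddCommGroup F] [NormedSpace 𝕜 F]
    [NormedAddCommGroup G] [NormedSpace 𝕜 G] {A : E → F →L[𝕜] G} {y : E}
    (hA : DifferentiableAt 𝕜 A y) (u : F) :
    ‖fderiv 𝕜 (fun y => A y u) y‖ ≤ ‖fderiv 𝕜 A y‖ * ‖u‖ := by
  rw [fderiv_clm_apply hA (differentiableAt_const u), fderiv_fun_const, Pi.zero_apply,
    ContinuousLinearMap.comp_zero, zero_add, ← ContinuousLinearMap.opNorm_flip]
  exact (fderiv 𝕜 A y).flip.le_opNorm u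

theorem perturbed_identity_diffeomorphism_general (d d' : ℕ)
    (A : EuclideanSpace ℝ (Fin d') →
      (EuclideanSpace ℝ (Fin d) →L[ℝ] EuclideanSpace ℝ (Fin d')))
    (hA : ContDiff ℝ 1 A)
    (c₀ : ℝ) (hDAbound : ∀ y, ‖fderiv ℝ A y‖ ≤ c₀)
    (r : ℝ) (hc₀r : c₀ * r < 1) :
    ∃ c : ℝ, 0 < c ∧
      ∀ u : EuclideanSpace ℝ (Fin d), ‖u‖ ≤ r →
        ContDiff ℝ 1 (fun y => y + A y u) ∧
        ∃ S : EuclideanSpace ℝ (Fin d') → EuclideanSpace ℝ (Fin d'),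
          ContDiff ℝ 1 S ∧
          Function.LeftInverse S (fun y => y + A y u) ∧
          Function.RightInverse S (fun y => y + A y u) ∧
          (∀ z, S z = z - A (S z) u) ∧
          (∀ z, ‖fderiv ℝ S z‖ ≤ 1 / (1 - c₀ * r)) ∧
          (∀ z, abs (|LinearMap.det ((fderiv ℝ S z).toLinearMap)| - 1) ≤ c * ‖u‖) := by
  have hc₀ : 0 ≤ c₀ := (norm_nonneg (fderiv ℝ A 0)).trans (hDAbound 0)
  have hk : 0 < 1 - c₀ * r := by linarith
  obtain ⟨L, hL, hdet⟩ :=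
    ContinuousLinearMap.exists_abs_abs_det_sub_one_le (E := EuclideanSpace ℝ (Fin d'))
      (1 / (1 - c₀ * r))
  refine ⟨L * c₀ / (1 - c₀ * r) + 1, by positivity, fun u hu => ?_⟩
  have hg : ContDiff ℝ 1 fun y => A y u := hA.clm_apply contDiff_const
  have hg' (y) : ‖fderiv ℝ (fun y => A y u) y‖ ≤ c₀ * ‖u‖ :=
    (norm_fderiv_apply_const_le (hA.differentiable one_ne_zero y) u).trans
      (mul_le_mul_of_nonneg_right (hDAbound y) (norm_nonneg u))
  have hg'r (y) : ‖fderiv ℝ (fun y => A y u) y‖ ≤ c₀ * r :=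
    (hg' y).trans (mul_le_mul_of_nonneg_left hu hc₀)
  obtain ⟨S, hS, hleft, hright⟩ := hg.exists_contDiff_inverse_id_add one_ne_zero hg'r hc₀r
  have hSd := hS.differentiable one_ne_zero
  have hDS (z) : ‖fderiv ℝ S z‖ ≤ 1 / (1 - c₀ * r) := by
    rw [one_div]
    exact norm_fderiv_le_of_inverse_id_add (hg.differentiable one_ne_zero) hg'r hc₀r hleft hright
      (hSd z)
  refine ⟨contDiff_id.add hg, S, hS, hleft, hright, fun z => eq_sub_of_add_eq (hright z), hDS,
    fun z => ?_⟩
  calc |(|(fderiv ℝ S z).det| - 1)| ≤ L * ‖fderiv ℝ S z - 1‖ := hdet _ (hDS z)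
    _ ≤ L * ((1 - c₀ * r)⁻¹ * (c₀ * ‖u‖)) := by
      gcongr
      exact (norm_fderiv_sub_one_le_of_inverse_id_add (hg.differentiable one_ne_zero) hg'r hc₀r
        hleft hright (hSd z)).trans (by gcongr; exact hg' _)
    _ = L * c₀ / (1 - c₀ * r) * ‖u‖ := by ring
    _ ≤ (L * c₀ / (1 - c₀ * r) + 1) * ‖u‖ := by gcongr; linarith

/-- **Perturbations of the identity along a matrix field are diffeomorphisms.**
Let `d' ≤ d` and let `A : ℝ^{d'} → L(ℝ^d, ℝ^{d'})` be continuously differentiable with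
`sup_y ‖A(y)‖ ≤ c₁ < 1` and `sup_y ‖DA(y)‖ ≤ c₀`, and let `r > 0` with `c₀ r < 1`. Then there
is a constant `c > 0` (depending only on `d'`, `c₀` and `r`) such that for every `u ∈ ℝ^d`
with `|u| ≤ r`, the map `F_u(y) = y + A(y)u` is a C¹ diffeomorphism of `ℝ^{d'}`; its inverse
`S_u` satisfies `S_u(z) = z − A(S_u(z))u`, `sup_z ‖DS_u(z)‖ ≤ 1/(1 − c₀ r)`, and
`sup_z | |det DS_u(z)| − 1 | ≤ c|u|`. -/
theorem perturbed_identity_diffeomorphism (d d' : ℕ) (hdd : d' ≤ d)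
    (A : EuclideanSpace ℝ (Fin d') →
      (EuclideanSpace ℝ (Fin d) →L[ℝ] EuclideanSpace ℝ (Fin d')))
    (hA : ContDiff ℝ 1 A)
    (c₀ c₁ : ℝ) (hc₁ : c₁ < 1) (hAbound : ∀ y, ‖A y‖ ≤ c₁)
    (hDAbound : ∀ y, ‖fderiv ℝ A y‖ ≤ c₀)
    (r : ℝ) (hr : 0 < r) (hc₀r : c₀ * r < 1) :
    ∃ c : ℝ, 0 < c ∧
      ∀ u : EuclideanSpace ℝ (Fin d), ‖u‖ ≤ r →
        ContDiff ℝ 1 (fun y => y + A y u) ∧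
        ∃ S : EuclideanSpace ℝ (Fin d') → EuclideanSpace ℝ (Fin d'),
          ContDiff ℝ 1 S ∧
          Function.LeftInverse S (fun y => y + A y u) ∧
          Function.RightInverse S (fun y => y + A y u) ∧
          (∀ z, S z = z - A (S z) u) ∧
          (∀ z, ‖fderiv ℝ S z‖ ≤ 1 / (1 - c₀ * r)) ∧
          (∀ z, abs (|LinearMap.det ((fderiv ℝ S z).toLinearMap)| - 1) ≤ c * ‖u‖) :=
  perturbed_identity_diffeomorphism_general d d' A hA c₀ hDAbound r hc₀r
end
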